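/- arXiv:0901.1175 — 2 statements merged into one kernel-verified Lean document; each statement's English description precedes it below -/
import Mathlib

section
/- For every n ≥ 1 and every sequence (t_k)_{k ≥ 0} in a commutative ring: Σ_{π ∈ NCL(n)} ∏_{A block of π} t_{|A|−1} = Σ_{α, β ∈ NC(n), α ≪ β} (∏_{U β-special block of α} t_{|U|−1}) · (∏_{V block of α that is not β-special} t_{|V|}). (Applied to the coefficients t_k of the reciprocal S-transform 1/S_a of a noncommutative random variable a with φ(a) = 1, both sides equal the moment φ(aⁿ).) -/
open scoped Classical

/-- The minimum of a finset of naturals (`0` if empty). -/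
noncomputable def fmin (A : Finset ℕ) : ℕ := sInf (A : Set ℕ)

/-- The maximum of a finset of naturals (`0` if empty). -/
noncomputable def fmax (A : Finset ℕ) : ℕ := sSup (A : Set ℕ)

/-- `α` is a partition of the finite set `F ⊆ ℕ`. -/
def IsPartitionOfSet (F : Finset ℕ) (α : Finset (Finset ℕ)) : Prop :=
  (∀ V ∈ α, V.Nonempty) ∧ (∀ V ∈ α, V ⊆ F) ∧ (∀ m ∈ F, ∃ V ∈ α, m ∈ V) ∧
    ∀ V ∈ α, ∀ W ∈ α, V ≠ W → V ∩ W = ∅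

/-- `α` is a partition of `{1,…,n}`. -/
def IsPartitionOf (n : ℕ) (α : Finset (Finset ℕ)) : Prop :=
  IsPartitionOfSet (Finset.Icc 1 n) α

/-- Two distinct blocks of the family `π` cross: there are `a < b < c < d` with
`a, c` in one block and `b, d` in a different block. -/
def IsCrossing (π : Finset (Finset ℕ)) : Prop :=
  ∃ A ∈ π, ∃ B ∈ π, A ≠ B ∧
    ∃ a ∈ A, ∃ b ∈ B, ∃ c ∈ A, ∃ d ∈ B, a < b ∧ b < c ∧ c < d

/-- `α ∈ NC(n)`: a non-crossing partition of `{1,…,n}`. -/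
def IsNCPartition (n : ℕ) (α : Finset (Finset ℕ)) : Prop :=
  IsPartitionOf n α ∧ ¬ IsCrossing α

/-- Reverse refinement order `α ≤ β`: every block of `α` is contained in a block of `β`
(equivalently, every block of `β` is a union of blocks of `α`). -/
def Refines (α β : Finset (Finset ℕ)) : Prop := ∀ V ∈ α, ∃ W ∈ β, V ⊆ W

/-- The partial order `α ≪ β`: `α ≤ β` and for every block `W` of `β` there is a block
`V` of `α` containing both `min W` and `max W`. -/
def LL (α β : Finset (Finset ℕ)) : Prop :=
  Refines α β ∧ ∀ W ∈ β, ∃ V ∈ α, fmin W ∈ V ∧ fmax W ∈ V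

/-- A block `V` (of `α`) is `β`-special: some block `W` of `β` has the same min and max. -/
def SpecialBlock (β : Finset (Finset ℕ)) (V : Finset ℕ) : Prop :=
  ∃ W ∈ β, fmin V = fmin W ∧ fmax V = fmax W

/-- `V` is an outer block of `α`: no block of `α` strictly nests around it. -/
def OuterBlock (α : Finset (Finset ℕ)) (V : Finset ℕ) : Prop :=
  ∀ V' ∈ α, ¬ (fmin V' < fmin V ∧ fmax V < fmax V')

/-- `π` is a linked partition of the finite set `F ⊆ ℕ`. -/
def IsLinkedPartitionOfSet (F : Finset ℕ) (π : Finset (Finset ℕ)) : Prop :=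
  (∀ A ∈ π, A.Nonempty) ∧ (∀ A ∈ π, A ⊆ F) ∧ (∀ m ∈ F, ∃ A ∈ π, m ∈ A) ∧
    ∀ A ∈ π, ∀ B ∈ π, A ≠ B →
      A ∩ B = ∅ ∨
        (2 ≤ A.card ∧ 2 ≤ B.card ∧ (A ∩ B).card = 1 ∧ fmin A ≠ fmin B ∧
          ∀ x ∈ A ∩ B, x = fmin A ∨ x = fmin B)

/-- `π ∈ NCL(F)`: a non-crossing linked partition of the finite set `F`. -/
def IsNCLOfSet (F : Finset ℕ) (π : Finset (Finset ℕ)) : Prop :=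
  IsLinkedPartitionOfSet F π ∧ ¬ IsCrossing π

/-- `π ∈ NCL(n)`: a non-crossing linked partition of `{1,…,n}`. -/
def IsNCL (n : ℕ) (π : Finset (Finset ℕ)) : Prop :=
  IsNCLOfSet (Finset.Icc 1 n) π

/-- The number of blocks of `π` containing `m`. -/
noncomputable def coverCount (π : Finset (Finset ℕ)) (m : ℕ) : ℕ :=
  (π.filter fun A => m ∈ A).card

/-- `m` is singly-covered by `π`: it lies in exactly one block. -/
def SinglyCovered (π : Finset (Finset ℕ)) (m : ℕ) : Prop := coverCount π m = 1

/-- `m` is doubly-covered by `π`: it lies in exactly two blocks. -/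
def DoublyCovered (π : Finset (Finset ℕ)) (m : ℕ) : Prop := coverCount π m = 2

/-- The partition `π̂` generated by the blocks of `π`: its blocks are the connected
components of the ground set under the relation of lying in a common block of `π`. -/
noncomputable def genPart (π : Finset (Finset ℕ)) : Finset (Finset ℕ) :=
  (π.sup id).image fun m =>
    (π.sup id).filter fun x =>
      Relation.EqvGen (fun a b => ∃ A ∈ π, a ∈ A ∧ b ∈ A) m x

/-- The unlinking `π̌` of a linked partition `π`. -/
noncomputable def unlink (π : Finset (Finset ℕ)) : Finset (Finset ℕ) :=
  π.image fun A => if SinglyCovered π (fmin A) then A else A.erase (fmin A)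

/-- The block of `α` containing `m` (empty if there is none). -/
noncomputable def blockOf (α : Finset (Finset ℕ)) (m : ℕ) : Finset ℕ :=
  (α.filter fun V => m ∈ V).sup id

/-- The successor of `m` in the cycle on the block `V` (elements in increasing order). -/
noncomputable def nextInBlock (V : Finset ℕ) (m : ℕ) : ℕ :=
  if m = fmax V then fmin V else fmin (V.filter fun x => m < x)

/-- The predecessor of `m` in the cycle on the block `V`. -/
noncomputable def prevInBlock (V : Finset ℕ) (m : ℕ) : ℕ :=
  if m = fmin V then fmax V else fmax (V.filter fun x => x < m)

/-- The permutation `P_α` associated to a partition `α`, as a function: each block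
`{i₁ < i₂ < ⋯ < iₘ}` becomes the cycle `i₁ ↦ i₂ ↦ ⋯ ↦ iₘ ↦ i₁`. -/
noncomputable def permOf (α : Finset (Finset ℕ)) (m : ℕ) : ℕ :=
  if m ∈ blockOf α m then nextInBlock (blockOf α m) m else m

/-- The inverse permutation `P_α⁻¹`, as a function. -/
noncomputable def permOfInv (α : Finset (Finset ℕ)) (m : ℕ) : ℕ :=
  if m ∈ blockOf α m then prevInBlock (blockOf α m) m else m

/-- The action `τ·α` of a map `τ` on a partition `α = {V₁,…,V_p}`, giving
`{τ(V₁),…,τ(V_p)}`. -/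
def mapPart (τ : ℕ → ℕ) (α : Finset (Finset ℕ)) : Finset (Finset ℕ) :=
  α.image fun V => V.image τ

/-- The cycled unlinking `π° := P_{π̂}⁻¹ · π̌`. -/
noncomputable def cycUnlink (π : Finset (Finset ℕ)) : Finset (Finset ℕ) :=
  mapPart (permOfInv (genPart π)) (unlink π)

/-- `NC(n)` as a finset. -/
noncomputable def NCF (n : ℕ) : Finset (Finset (Finset ℕ)) :=
  ((Finset.Icc 1 n).powerset.powerset).filter (IsNCPartition n)

/-- `NCL(n)` as a finset. -/
noncomputable def NCLF (n : ℕ) : Finset (Finset (Finset ℕ)) :=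
  ((Finset.Icc 1 n).powerset.powerset).filter (IsNCL n)

/-- The restriction `π|_E`: the blocks of `π` contained in `E`. -/
def restrictL (π : Finset (Finset ℕ)) (E : Finset ℕ) : Finset (Finset ℕ) :=
  π.filter fun A => A ⊆ E

/-- The partition `β₀` obtained from `β` by leaving blocks of size `≤ 2` intact and
breaking each block `W` with `|W| ≥ 3` into the doubleton `{min W, max W}` together
with `|W| - 2` singletons. -/
noncomputable def breakBlocks (β : Finset (Finset ℕ)) : Finset (Finset ℕ) :=
  β.biUnion fun W =>
    if W.card ≤ 2 then {W}
    else insert {fmin W, fmax W} ((W \ {fmin W, fmax W}).image fun x => ({x} : Finset ℕ))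


/-!
The two sides are matched by the bijection `π ↦ (π°, π̂)` of the paper: `π̂ = genPart π` is the
partition of `π` into connected components, and `π° = cycUnlink π` removes the minimum of every
block whose minimum is shared with another block, then rotates each component one step backwards
along the cycle `P_{π̂}`. The inverse `relink β α` rotates every block `V` of `α` forwards along
`P_β` and, unless `V` is `β`-special, puts `min V` back. So a `β`-special block keeps its size and
any other block gains one element, which accounts for the weights `t_{|U|-1}` and `t_{|V|}`.
-/

section MinMax
variable {A : Finset ℕ} {a : ℕ}

lemma fmin_mem (h : A.Nonempty) : fmin A ∈ A :=
  Nat.sInf_mem (s := (A : Set ℕ)) (by simpa using h)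

lemma fmin_le (h : a ∈ A) : fmin A ≤ a := Nat.sInf_le (by simpa using h)

lemma fmax_mem (h : A.Nonempty) : fmax A ∈ A :=
  Nat.sSup_mem (s := (A : Set ℕ)) (by simpa using h) A.bddAbove

lemma le_fmax (h : a ∈ A) : a ≤ fmax A := le_csSup A.bddAbove (by simpa using h)

lemma fmin_eq_of_forall_le (h : a ∈ A) (hle : ∀ b ∈ A, a ≤ b) : fmin A = a :=
  le_antisymm (fmin_le h) (hle _ (fmin_mem ⟨a, h⟩))

lemma fmax_eq_of_forall_le (h : a ∈ A) (hle : ∀ b ∈ A, b ≤ a) : fmax A = a :=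
  le_antisymm (hle _ (fmax_mem ⟨a, h⟩)) (le_fmax h)

lemma fmin_lt_of_mem_of_ne (h : a ∈ A) (hne : a ≠ fmin A) : fmin A < a :=
  (fmin_le h).lt_of_ne' hne

lemma lt_fmax_of_mem_of_ne (h : a ∈ A) (hne : a ≠ fmax A) : a < fmax A :=
  (le_fmax h).lt_of_ne hne

end MinMax

section Cycle
variable {V : Finset ℕ} {m x : ℕ}

lemma nextInBlock_spec (hm : m ∈ V) (h : m ≠ fmax V) :
    nextInBlock V m ∈ V ∧ m < nextInBlock V m := by
  have hne : (V.filter fun x => m < x).Nonempty :=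
    ⟨fmax V, by simpa using ⟨fmax_mem ⟨m, hm⟩, lt_fmax_of_mem_of_ne hm h⟩⟩
  simpa [nextInBlock, h] using fmin_mem hne

lemma nextInBlock_mem (hm : m ∈ V) : nextInBlock V m ∈ V := by
  by_cases h : m = fmax V
  · simpa [nextInBlock, h] using fmin_mem ⟨m, hm⟩
  · exact (nextInBlock_spec hm h).1

lemma lt_nextInBlock (hm : m ∈ V) (h : m ≠ fmax V) : m < nextInBlock V m :=
  (nextInBlock_spec hm h).2

lemma nextInBlock_le (h : m ≠ fmax V) (hx : x ∈ V) (hlt : m < x) : nextInBlock V m ≤ x := by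
  rw [nextInBlock, if_neg h]
  exact fmin_le (by simp [hx, hlt])

lemma prevInBlock_spec (hm : m ∈ V) (h : m ≠ fmin V) :
    prevInBlock V m ∈ V ∧ prevInBlock V m < m := by
  have hne : (V.filter fun x => x < m).Nonempty :=
    ⟨fmin V, by simpa using ⟨fmin_mem ⟨m, hm⟩, fmin_lt_of_mem_of_ne hm h⟩⟩
  simpa [prevInBlock, h] using fmax_mem hne

lemma prevInBlock_mem (hm : m ∈ V) : prevInBlock V m ∈ V := by
  by_cases h : m = fmin V
  · simpa [prevInBlock, h] using fmax_mem ⟨m, hm⟩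
  · exact (prevInBlock_spec hm h).1

lemma prevInBlock_lt (hm : m ∈ V) (h : m ≠ fmin V) : prevInBlock V m < m :=
  (prevInBlock_spec hm h).2

lemma le_prevInBlock (h : m ≠ fmin V) (hx : x ∈ V) (hlt : x < m) : x ≤ prevInBlock V m := by
  rw [prevInBlock, if_neg h]
  exact le_fmax (by simp [hx, hlt])

lemma nextInBlock_fmax (V : Finset ℕ) : nextInBlock V (fmax V) = fmin V := by simp [nextInBlock]

lemma prevInBlock_fmin (V : Finset ℕ) : prevInBlock V (fmin V) = fmax V := by simp [prevInBlock]

lemma prevInBlock_nextInBlock (hm : m ∈ V) : prevInBlock V (nextInBlock V m) = m := by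
  by_cases h : m = fmax V
  · rw [h, nextInBlock_fmax, prevInBlock_fmin]
  obtain ⟨hnext, hlt⟩ := nextInBlock_spec hm h
  have hne : nextInBlock V m ≠ fmin V := by have := fmin_le hm; omega
  obtain ⟨hprev, hlt'⟩ := prevInBlock_spec hnext hne
  have := nextInBlock_le h hprev
  have := le_prevInBlock hne hm hlt
  omega

lemma nextInBlock_prevInBlock (hm : m ∈ V) : nextInBlock V (prevInBlock V m) = m := by
  by_cases h : m = fmin V
  · rw [h, prevInBlock_fmin, nextInBlock_fmax]
  obtain ⟨hprev, hlt⟩ := prevInBlock_spec hm h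
  have hne : prevInBlock V m ≠ fmax V := by have := le_fmax hm; omega
  obtain ⟨hnext, hlt'⟩ := nextInBlock_spec hprev hne
  have := le_prevInBlock h hnext
  have := nextInBlock_le hne hm hlt
  omega

end Cycle

namespace IsPartitionOfSet
variable {F : Finset ℕ} {β : Finset (Finset ℕ)} {W W' : Finset ℕ} {m : ℕ}

lemma eq_of_mem (h : IsPartitionOfSet F β) (hW : W ∈ β) (hW' : W' ∈ β)
    (hm : m ∈ W) (hm' : m ∈ W') : W = W' := by
  by_contra hne
  simpa [h.2.2.2 W hW W' hW' hne] using Finset.mem_inter.2 ⟨hm, hm'⟩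

variable (h : IsPartitionOfSet F β) (hW : W ∈ β)
include h hW

lemma blockOf_eq (hm : m ∈ W) : blockOf β m = W := by
  have : β.filter (fun V => m ∈ V) = {W} := by
    ext X
    simp only [Finset.mem_filter, Finset.mem_singleton]
    exact ⟨fun ⟨hX, hmX⟩ => h.eq_of_mem hX hW hmX hm, by rintro rfl; exact ⟨hW, hm⟩⟩
  simp [blockOf, this]

lemma permOf_eq (hm : m ∈ W) : permOf β m = nextInBlock W m := by
  rw [permOf, h.blockOf_eq hW hm, if_pos hm]

lemma permOfInv_eq (hm : m ∈ W) : permOfInv β m = prevInBlock W m := by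
  rw [permOfInv, h.blockOf_eq hW hm, if_pos hm]

lemma permOf_mem (hm : m ∈ W) : permOf β m ∈ W := by
  rw [h.permOf_eq hW hm]; exact nextInBlock_mem hm

lemma permOfInv_mem (hm : m ∈ W) : permOfInv β m ∈ W := by
  rw [h.permOfInv_eq hW hm]; exact prevInBlock_mem hm

lemma permOfInv_permOf (hm : m ∈ W) : permOfInv β (permOf β m) = m := by
  rw [h.permOfInv_eq hW (h.permOf_mem hW hm), h.permOf_eq hW hm, prevInBlock_nextInBlock hm]

lemma permOf_permOfInv (hm : m ∈ W) : permOf β (permOfInv β m) = m := by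
  rw [h.permOf_eq hW (h.permOfInv_mem hW hm), h.permOfInv_eq hW hm, nextInBlock_prevInBlock hm]

lemma permOf_fmax : permOf β (fmax W) = fmin W := by
  rw [h.permOf_eq hW (fmax_mem (h.1 W hW)), nextInBlock_fmax]

lemma permOfInv_fmin : permOfInv β (fmin W) = fmax W := by
  rw [h.permOfInv_eq hW (fmin_mem (h.1 W hW)), prevInBlock_fmin]

lemma lt_permOf (hm : m ∈ W) (hne : m ≠ fmax W) : m < permOf β m := by
  rw [h.permOf_eq hW hm]; exact lt_nextInBlock hm hne

lemma permOfInv_lt (hm : m ∈ W) (hne : m ≠ fmin W) : permOfInv β m < m := by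
  rw [h.permOfInv_eq hW hm]; exact prevInBlock_lt hm hne

lemma eq_fmin_of_permOfInv_eq_fmax (hm : m ∈ W) (hmax : permOfInv β m = fmax W) :
    m = fmin W := by
  by_contra hne
  have := h.permOfInv_lt hW hm hne
  have := le_fmax hm
  omega

omit hW in
lemma injOn_permOfInv_ground : Set.InjOn (permOfInv β) F := fun x hx y hy hxy => by
  obtain ⟨W, hW, hxW⟩ := h.2.2.1 x hx
  obtain ⟨W', hW', hyW'⟩ := h.2.2.1 y hy
  rw [← h.permOf_permOfInv hW hxW, hxy, h.permOf_permOfInv hW' hyW']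

omit hW in
lemma injOn_permOf_ground : Set.InjOn (permOf β) F := fun x hx y hy hxy => by
  obtain ⟨W, hW, hxW⟩ := h.2.2.1 x hx
  obtain ⟨W', hW', hyW'⟩ := h.2.2.1 y hy
  rw [← h.permOfInv_permOf hW hxW, hxy, h.permOfInv_permOf hW' hyW']

end IsPartitionOfSet

lemma Relation.ReflTransGen.exists_exit {α : Type*} {r : α → α → Prop} {P : α → Prop} {a b : α}
    (h : Relation.ReflTransGen r a b) (ha : P a) (hb : ¬ P b) :
    ∃ u v, Relation.ReflTransGen r a u ∧ r u v ∧ P u ∧ ¬ P v := by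
  induction h with
  | refl => exact absurd ha hb
  | @tail c d hac hcd ih =>
    by_cases hc : P c
    · exact ⟨c, d, hac, hcd, hc, hb⟩
    · obtain ⟨u, v, hau, huv, hu, hv⟩ := ih hc
      exact ⟨u, v, hau, huv, hu, hv⟩

def SharesBlock (π : Finset (Finset ℕ)) (a b : ℕ) : Prop := ∃ A ∈ π, a ∈ A ∧ b ∈ A

instance (π : Finset (Finset ℕ)) : Std.Symm (SharesBlock π) :=
  ⟨fun _ _ ⟨A, hA, ha, hb⟩ => ⟨A, hA, hb, ha⟩⟩

abbrev Connected (π : Finset (Finset ℕ)) : ℕ → ℕ → Prop := Relation.EqvGen (SharesBlock π)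

noncomputable def component (F : Finset ℕ) (π : Finset (Finset ℕ)) (m : ℕ) : Finset ℕ :=
  F.filter (Connected π m)

lemma genPart_eq_image_component (π : Finset (Finset ℕ)) :
    genPart π = (π.sup id).image (component (π.sup id) π) := rfl

section Connected
variable {π : Finset (Finset ℕ)} {F : Finset ℕ} {A : Finset ℕ} {a b c d m x : ℕ}

lemma Connected.symm (h : Connected π a b) : Connected π b a := Relation.EqvGen.symm _ _ h

lemma Connected.trans (h : Connected π a b) (h' : Connected π b c) : Connected π a c :=
  Relation.EqvGen.trans _ _ _ h h'

lemma connected_of_mem (hA : A ∈ π) (ha : a ∈ A) (hb : b ∈ A) : Connected π a b :=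
  Relation.EqvGen.rel _ _ ⟨A, hA, ha, hb⟩

lemma Connected.exists_exit {P : ℕ → Prop} (h : Connected π a b) (ha : P a) (hb : ¬ P b) :
    ∃ u v, Connected π a u ∧ SharesBlock π u v ∧ P u ∧ ¬ P v := by
  rw [Connected, Relation.EqvGen.eqvGen_eq_reflTransGen] at h ⊢
  exact h.exists_exit ha hb

lemma Connected.induction {P : ℕ → Prop} (hP : ∀ u v, P u → SharesBlock π u v → P v)
    (h : Connected π a b) (ha : P a) : P b := by
  by_contra hb
  obtain ⟨u, v, -, huv, hu, hv⟩ := h.exists_exit ha hb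
  exact hv (hP u v hu huv)

lemma mem_component : x ∈ component F π m ↔ x ∈ F ∧ Connected π m x := Finset.mem_filter

lemma mem_component_self (hm : m ∈ F) : m ∈ component F π m :=
  mem_component.2 ⟨hm, Relation.EqvGen.refl m⟩

lemma component_eq_of_mem (hx : x ∈ component F π m) : component F π x = component F π m := by
  ext y
  simp only [mem_component]
  exact ⟨fun ⟨hy, hxy⟩ => ⟨hy, (mem_component.1 hx).2.trans hxy⟩,
    fun ⟨hy, hmy⟩ => ⟨hy, (mem_component.1 hx).2.symm.trans hmy⟩⟩

lemma exists_block_straddling (h : Connected π a c) (hab : a < b) (hbc : b < c)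
    (hb : ¬ Connected π a b) : ∃ A ∈ π, ∃ p ∈ A, ∃ q ∈ A, p < b ∧ b < q ∧ Connected π a p := by
  obtain ⟨u, v, hau, ⟨A, hA, hu, hv⟩, hub, hvb⟩ :=
    h.exists_exit (P := (· < b)) hab (by simpa using hbc.le)
  have hvb' : v ≠ b := by
    rintro rfl
    exact hb (hau.trans (connected_of_mem hA hu hv))
  exact ⟨A, hA, u, hu, v, hv, hub, by simp at hvb; omega, hau⟩

variable (hnc : ¬ IsCrossing π)
include hnc

lemma Connected.mem_Ioo_of_straddle {p q y₀ y : ℕ} (hA : A ∈ π) (hp : p ∈ A) (hq : q ∈ A)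
    (hpy : p < y₀) (hyq : y₀ < q) (hpy₀ : ¬ Connected π p y₀) (hy : Connected π y₀ y) :
    p < y ∧ y < q := by
  by_contra hout
  obtain ⟨u, v, hu, ⟨B, hB, huB, hvB⟩, ⟨hpu, huq⟩, hv⟩ :=
    hy.exists_exit (P := fun z => p < z ∧ z < q) ⟨hpy, hyq⟩ hout
  have hpv : ¬ Connected π p v := fun h =>
    hpy₀ (h.trans (hu.trans (connected_of_mem hB huB hvB)).symm)
  have hBA : B ≠ A := by
    rintro rfl
    exact hpy₀ ((connected_of_mem hB hp huB).trans hu.symm)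
  have hvp : v ≠ p := by rintro rfl; exact hpv (Relation.EqvGen.refl _)
  have hvq : v ≠ q := by rintro rfl; exact hpv (connected_of_mem hA hp hq)
  rcases lt_or_gt_of_ne hvp with hlt | hlt
  · exact hnc ⟨B, hB, A, hA, hBA, v, hvB, p, hp, u, huB, q, hq, hlt, hpu, huq⟩
  · have : q < v := by omega
    exact hnc ⟨A, hA, B, hB, hBA.symm, p, hp, u, huB, q, hq, v, hvB, hpu, huq, this⟩

/-- A block of the component of `a, c` straddles `b` and so traps the component of `b, d` strictly
inside it; symmetrically a block of that component traps the first one, which is absurd. -/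
lemma connected_of_interleaved (hac : Connected π a c) (hbd : Connected π b d)
    (hab : a < b) (hbc : b < c) (hcd : c < d) : Connected π a b := by
  by_contra hnab
  obtain ⟨A, hA, p, hp, q, hq, hpb, hbq, hap⟩ := exists_block_straddling hac hab hbc hnab
  have hnbc : ¬ Connected π b c := fun h => hnab (hac.trans h.symm)
  obtain ⟨B, hB, p', hp', q', hq', hp'c, hcq', hbp'⟩ :=
    exists_block_straddling hbd hbc hcd hnbc
  have h1 := (Connected.mem_Ioo_of_straddle hnc hA hp hq hpb hbq
    (fun h => hnab (hap.trans h)) hbp').1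
  have h2 := (Connected.mem_Ioo_of_straddle hnc hB hp' hq' hp'c hcq'
    (fun h => hnbc (hbp'.trans h)) (hac.symm.trans hap)).1
  omega

end Connected

lemma singlyCovered_iff {π : Finset (Finset ℕ)} {A : Finset ℕ} {m : ℕ} (hA : A ∈ π) (hm : m ∈ A) :
    SinglyCovered π m ↔ ∀ B ∈ π, m ∈ B → B = A := by
  rw [SinglyCovered, coverCount, Finset.card_eq_one]
  constructor
  · rintro ⟨C, hC⟩ B hB hmB
    have h1 : B ∈ π.filter (m ∈ ·) := Finset.mem_filter.2 ⟨hB, hmB⟩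
    have h2 : A ∈ π.filter (m ∈ ·) := Finset.mem_filter.2 ⟨hA, hm⟩
    rw [hC, Finset.mem_singleton] at h1 h2
    rw [h1, h2]
  · intro h
    exact ⟨A, Finset.eq_singleton_iff_unique_mem.2
      ⟨Finset.mem_filter.2 ⟨hA, hm⟩, fun B hB => h B (Finset.mem_filter.1 hB).1
        (Finset.mem_filter.1 hB).2⟩⟩

lemma exists_ne_of_not_singlyCovered {π : Finset (Finset ℕ)} {A : Finset ℕ} {m : ℕ} (hA : A ∈ π)
    (hm : m ∈ A) (hns : ¬ SinglyCovered π m) : ∃ B ∈ π, m ∈ B ∧ B ≠ A := by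
  by_contra! h
  exact hns ((singlyCovered_iff hA hm).2 h)

/-- `BlockPath π m z D`: a walk from `m` through blocks of `π` reaches `z ≠ m` inside its last
block `D`; the walk only changes blocks at a point the two blocks share. -/
inductive BlockPath (π : Finset (Finset ℕ)) (m : ℕ) : ℕ → Finset ℕ → Prop
  | base {D z} : D ∈ π → m ∈ D → z ∈ D → z ≠ m → BlockPath π m z D
  | step {z D z' E} : BlockPath π m z D → E ∈ π → E ≠ D → z ∈ E → z' ∈ E → z' ≠ z →
      BlockPath π m z' E

lemma BlockPath.exists_of_mem {π : Finset (Finset ℕ)} {m z y : ℕ} {D : Finset ℕ}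
    (h : BlockPath π m z D) (hy : y ∈ D) (hym : y ≠ m) : ∃ D', BlockPath π m y D' := by
  induction h with
  | base hD hmD _ _ => exact ⟨_, .base hD hmD hy hym⟩
  | @step z D₀ z' E h hE hED hzE _ _ _ =>
    rcases eq_or_ne y z with rfl | hyz
    · exact ⟨D₀, h⟩
    · exact ⟨E, h.step hE hED hzE hy hyz⟩

namespace IsLinkedPartitionOfSet
variable {F : Finset ℕ} {π : Finset (Finset ℕ)} {A B D : Finset ℕ} {m x : ℕ}
variable (hlp : IsLinkedPartitionOfSet F π)
include hlp

lemma linked_of_mem (hA : A ∈ π) (hB : B ∈ π) (hne : A ≠ B) (hmA : m ∈ A) (hmB : m ∈ B) :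
    2 ≤ A.card ∧ 2 ≤ B.card ∧ fmin A ≠ fmin B ∧ (m = fmin A ∨ m = fmin B) := by
  rcases hlp.2.2.2 A hA B hB hne with h | ⟨h1, h2, -, h4, h5⟩
  · simpa [h] using Finset.mem_inter.2 ⟨hmA, hmB⟩
  · exact ⟨h1, h2, h4, h5 m (Finset.mem_inter.2 ⟨hmA, hmB⟩)⟩

lemma subset_component (hA : A ∈ π) (hm : m ∈ A) : A ⊆ component F π m := fun _ hx =>
  mem_component.2 ⟨hlp.2.1 A hA hx, connected_of_mem hA hm hx⟩

lemma eq_of_mem_of_fmin_component (hmin : fmin (component F π m) = m)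
    (hA : A ∈ π) (hB : B ∈ π) (hmA : m ∈ A) (hmB : m ∈ B) : A = B := by
  by_contra hne
  have key : ∀ {C}, C ∈ π → m ∈ C → m ≤ fmin C := fun hC hmC =>
    hmin ▸ fmin_le (hlp.subset_component hC hmC (fmin_mem ⟨m, hmC⟩))
  obtain ⟨-, -, hAB, h⟩ := hlp.linked_of_mem hA hB hne hmA hmB
  have := key hA hmA
  have := key hB hmB
  have := fmin_le hmA
  have := fmin_le hmB
  omega

/-- If `fmin A` lies in `A` only, every change of blocks along a walk from `fmin A` happens at the
minimum of the new block, so the minima of the blocks visited never drop below `fmin A`. -/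
lemma blockPath_spec (hA : A ∈ π) (hsingly : ∀ B ∈ π, fmin A ∈ B → B = A)
    (h : BlockPath π (fmin A) x D) : x ∈ D ∧ fmin A ≤ fmin D ∧ x ≠ fmin D ∧ D ∈ π := by
  induction h with
  | base hD hmD hzD hzm =>
    obtain rfl := hsingly _ hD hmD
    exact ⟨hzD, le_rfl, hzm, hD⟩
  | @step z D₀ z' E _ hE hED hzE hz'E hz'z ih =>
    obtain ⟨hzD, hle, hzne, hD₀⟩ := ih
    obtain ⟨-, -, -, hz⟩ := hlp.linked_of_mem hD₀ hE hED.symm hzD hzE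
    have hzE' : z = fmin E := hz.resolve_left hzne
    have := fmin_le hzD
    exact ⟨hz'E, by omega, hzE' ▸ hz'z, hE⟩

lemma fmin_le_of_connected (hA : A ∈ π) (hsingly : ∀ B ∈ π, fmin A ∈ B → B = A)
    (hx : Connected π (fmin A) x) : fmin A ≤ x := by
  suffices x = fmin A ∨ ∃ D, BlockPath π (fmin A) x D by
    rcases this with rfl | ⟨D, hD⟩
    · exact le_rfl
    · obtain ⟨h1, h2, -⟩ := hlp.blockPath_spec hA hsingly hD
      exact h2.trans (fmin_le h1)
  refine hx.induction (P := fun x => x = fmin A ∨ ∃ D, BlockPath π (fmin A) x D) ?_ (Or.inl rfl)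
  rintro a b ha ⟨E, hE, haE, hbE⟩
  rcases eq_or_ne b (fmin A) with hb | hb
  · exact Or.inl hb
  rcases ha with rfl | ⟨D, hD⟩
  · exact Or.inr ⟨E, .base hE haE hbE hb⟩
  rcases eq_or_ne E D with rfl | hED
  · exact Or.inr (hD.exists_of_mem hbE hb)
  rcases eq_or_ne b a with rfl | hba
  · exact Or.inr ⟨D, hD⟩
  · exact Or.inr ⟨E, hD.step hE hED haE hbE hba⟩

lemma exists_fmin_lt (hA : A ∈ π) (hne : fmin A ≠ fmax (component F π (fmin A))) :
    ∃ x ∈ A, fmin A < x := by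
  have hmA : fmin A ∈ A := fmin_mem (hlp.1 A hA)
  have hcomp : (component F π (fmin A)).Nonempty := ⟨_, mem_component_self (hlp.2.1 A hA hmA)⟩
  obtain ⟨u, v, -, ⟨D, hD, huD, hvD⟩, rfl, hv⟩ :=
    (mem_component.1 (fmax_mem hcomp)).2.exists_exit (P := (· = fmin A)) rfl (Ne.symm hne)
  obtain ⟨x, hx, hxm⟩ : ∃ x ∈ A, x ≠ fmin A := by
    rcases eq_or_ne D A with rfl | hDA
    · exact ⟨v, hvD, hv⟩
    · exact Finset.exists_mem_ne (hlp.linked_of_mem hA hD hDA.symm hmA huD).1 _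
  exact ⟨x, hx, fmin_lt_of_mem_of_ne hx hxm⟩

variable (hnc : ¬ IsCrossing π)
include hnc

lemma sharesBlock_mem_Ioo {a u v : ℕ} (hA : A ∈ π) (ha : a ∈ A) (hlt : fmin A < a)
    (hgap : ∀ x ∈ A, fmin A < x → a ≤ x) (hu : fmin A < u ∧ u < a) (huv : SharesBlock π u v) :
    fmin A < v ∧ v < a := by
  obtain ⟨D, hD, huD, hvD⟩ := huv
  have hmA : fmin A ∈ A := fmin_mem ⟨a, ha⟩
  have hDA : D ≠ A := by
    rintro rfl
    exact absurd (hgap u huD hu.1) (by omega)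
  rcases lt_trichotomy v (fmin A) with hv | hv | hv
  · exact absurd ⟨D, hD, A, hA, hDA, v, hvD, _, hmA, u, huD, a, ha, hv, hu.1, hu.2⟩ hnc
  · obtain ⟨-, -, hmin, -⟩ := hlp.linked_of_mem hA hD hDA.symm hmA (hv ▸ hvD)
    have hlt' : fmin D < fmin A := (fmin_le (hv ▸ hvD)).lt_of_ne hmin.symm
    exact absurd ⟨D, hD, A, hA, hDA, fmin D, fmin_mem ⟨v, hvD⟩, _, hmA, u, huD, a, ha,
      hlt', hu.1, hu.2⟩ hnc
  rcases lt_trichotomy v a with hva | rfl | hva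
  · exact ⟨hv, hva⟩
  · obtain ⟨-, -, -, h⟩ := hlp.linked_of_mem hA hD hDA.symm ha hvD
    have := fmin_le huD
    omega
  · exact absurd ⟨A, hA, D, hD, hDA.symm, _, hmA, u, huD, a, ha, v, hvD, hu.1, hu.2, hva⟩ hnc

lemma nextInBlock_component_fmin_mem (hA : A ∈ π)
    (hne : fmin A ≠ fmax (component F π (fmin A))) :
    nextInBlock (component F π (fmin A)) (fmin A) ∈ A := by
  set K := component F π (fmin A)
  have hmA : fmin A ∈ A := fmin_mem (hlp.1 A hA)
  have hmK : fmin A ∈ K := mem_component_self (hlp.2.1 A hA hmA)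
  obtain ⟨hzK, hmz⟩ := nextInBlock_spec hmK hne
  by_contra hzA
  obtain ⟨x, hx, hmx⟩ := hlp.exists_fmin_lt hA hne
  have hmax : fmin A ≠ fmax A := (hmx.trans_le (le_fmax hx)).ne
  obtain ⟨haA, hma⟩ := nextInBlock_spec hmA hmax
  have hza : nextInBlock K (fmin A) < nextInBlock A (fmin A) :=
    (nextInBlock_le hne (hlp.subset_component hA hmA haA) hma).lt_of_ne fun h => hzA (h ▸ haA)
  have := ((mem_component.1 hzK).2.symm.induction
    (P := fun x => fmin A < x ∧ x < nextInBlock A (fmin A))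
    (fun _ _ hu huv => hlp.sharesBlock_mem_Ioo hnc hA haA hma
      (fun _ hx hlt => nextInBlock_le hmax hx hlt) hu huv)
    ⟨hmz, hza⟩).1
  omega

end IsLinkedPartitionOfSet

noncomputable def relinkBlock (β : Finset (Finset ℕ)) (V : Finset ℕ) : Finset ℕ :=
  if SpecialBlock β V then V.image (permOf β) else insert (fmin V) (V.image (permOf β))

noncomputable def relink (β α : Finset (Finset ℕ)) : Finset (Finset ℕ) := α.image (relinkBlock β)

lemma relinkBlock_mem_relink {α β : Finset (Finset ℕ)} {V : Finset ℕ} (hV : V ∈ α) :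
    relinkBlock β V ∈ relink β α :=
  Finset.mem_image_of_mem _ hV

lemma image_permOf_subset_relinkBlock {β : Finset (Finset ℕ)} {V : Finset ℕ} :
    V.image (permOf β) ⊆ relinkBlock β V := by
  unfold relinkBlock
  split
  · exact Finset.Subset.refl _
  · exact Finset.subset_insert _ _

lemma mem_relinkBlock {β : Finset (Finset ℕ)} {V : Finset ℕ} {x : ℕ} (hx : x ∈ relinkBlock β V) :
    (∃ v ∈ V, permOf β v = x) ∨ (¬ SpecialBlock β V ∧ x = fmin V) := by
  unfold relinkBlock at hx
  split at hx
  · exact Or.inl (Finset.mem_image.1 hx)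
  · next hns =>
    rcases Finset.mem_insert.1 hx with rfl | hx
    · exact Or.inr ⟨hns, rfl⟩
    · exact Or.inl (Finset.mem_image.1 hx)

section Relink
variable {F : Finset ℕ} {α β : Finset (Finset ℕ)} {V V' W : Finset ℕ} {v x : ℕ}

lemma IsPartitionOfSet.fmin_injOn (hα : IsPartitionOfSet F α) (hV : V ∈ α) (hV' : V' ∈ α)
    (h : fmin V = fmin V') : V = V' :=
  hα.eq_of_mem hV hV' (fmin_mem (hα.1 V hV)) (h ▸ fmin_mem (hα.1 V' hV'))

lemma LL.exists_special (hβ : IsPartitionOfSet F β) (hll : LL α β) (hW : W ∈ β) :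
    ∃ L ∈ α, L ⊆ W ∧ fmin L = fmin W ∧ fmax L = fmax W := by
  obtain ⟨L, hL, h1, h2⟩ := hll.2 W hW
  obtain ⟨W', hW', hsub⟩ := hll.1 L hL
  obtain rfl := hβ.eq_of_mem hW' hW (hsub h1) (fmin_mem (hβ.1 W hW))
  exact ⟨L, hL, hsub, le_antisymm (fmin_le h1) (fmin_le (hsub (fmin_mem ⟨_, h1⟩))),
    le_antisymm (le_fmax (hsub (fmax_mem ⟨_, h1⟩))) (le_fmax h2)⟩

variable (hα : IsPartitionOfSet F α) (hβ : IsPartitionOfSet F β)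

include hα hβ in
lemma specialBlock_iff (hV : V ∈ α) (hW : W ∈ β) (hsub : V ⊆ W) :
    SpecialBlock β V ↔ fmin V = fmin W ∧ fmax V = fmax W := by
  refine ⟨fun ⟨W', hW', h1, h2⟩ => ?_, fun h => ⟨W, hW, h⟩⟩
  obtain rfl := hβ.eq_of_mem hW' hW (h1 ▸ fmin_mem (hβ.1 W' hW')) (hsub (fmin_mem (hα.1 V hV)))
  exact ⟨h1, h2⟩

include hα hβ in
lemma relinkBlock_subset (hV : V ∈ α) (hW : W ∈ β) (hsub : V ⊆ W) : relinkBlock β V ⊆ W := by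
  intro x hx
  rcases mem_relinkBlock hx with ⟨v, hv, rfl⟩ | ⟨-, rfl⟩
  · exact hβ.permOf_mem hW (hsub hv)
  · exact hsub (fmin_mem (hα.1 V hV))

variable (hll : LL α β)
include hα hβ hll

lemma specialBlock_of_mem_fmin_or_fmax (hV : V ∈ α) (hW : W ∈ β)
    (h : fmin W ∈ V ∨ fmax W ∈ V) : SpecialBlock β V := by
  obtain ⟨L, hL, -, h1, h2⟩ := hll.exists_special hβ hW
  have hLne := hα.1 L hL
  obtain rfl : V = L := by
    rcases h with h | h
    · exact hα.eq_of_mem hV hL h (h1 ▸ fmin_mem hLne)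
    · exact hα.eq_of_mem hV hL h (h2 ▸ fmax_mem hLne)
  exact ⟨W, hW, h1, h2⟩

lemma fmin_lt_of_not_special (hV : V ∈ α) (hW : W ∈ β) (hsub : V ⊆ W)
    (hns : ¬ SpecialBlock β V) : fmin W < fmin V := by
  have hVne := hα.1 V hV
  refine (fmin_le (hsub (fmin_mem hVne))).lt_of_ne fun h => hns ?_
  exact specialBlock_of_mem_fmin_or_fmax hα hβ hll hV hW (Or.inl (h ▸ fmin_mem hVne))

lemma lt_permOf_of_not_special (hV : V ∈ α) (hns : ¬ SpecialBlock β V) (hv : v ∈ V) :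
    v < permOf β v := by
  obtain ⟨W, hW, hsub⟩ := hll.1 V hV
  exact hβ.lt_permOf hW (hsub hv) fun h =>
    hns (specialBlock_of_mem_fmin_or_fmax hα hβ hll hV hW (Or.inr (h ▸ hv)))

lemma fmin_relinkBlock (hV : V ∈ α) : fmin (relinkBlock β V) = fmin V := by
  have hVne := hα.1 V hV
  obtain ⟨W, hW, hsub⟩ := hll.1 V hV
  by_cases hsp : SpecialBlock β V
  · -- the wrap-around `fmax W ↦ fmin W` puts `fmin V = fmin W` into the block
    obtain ⟨h1, h2⟩ := (specialBlock_iff hα hβ hV hW hsub).1 hsp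
    have hmax : fmax W ∈ V := h2 ▸ fmax_mem hVne
    refine fmin_eq_of_forall_le (image_permOf_subset_relinkBlock
      (Finset.mem_image.2 ⟨_, hmax, by rw [hβ.permOf_fmax hW, h1]⟩)) fun b hb => ?_
    exact h1 ▸ fmin_le (relinkBlock_subset hα hβ hV hW hsub hb)
  · rw [relinkBlock, if_neg hsp]
    refine fmin_eq_of_forall_le (Finset.mem_insert_self _ _) fun b hb => ?_
    rcases Finset.mem_insert.1 hb with rfl | hb
    · exact le_rfl
    · obtain ⟨v, hv, rfl⟩ := Finset.mem_image.1 hb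
      exact (fmin_le hv).trans (lt_permOf_of_not_special hα hβ hll hV hsp hv).le

lemma fmin_mem_relinkBlock (hV : V ∈ α) : fmin V ∈ relinkBlock β V := by
  rw [← fmin_relinkBlock hα hβ hll hV]
  obtain ⟨v, hv⟩ := hα.1 V hV
  exact fmin_mem ⟨_, image_permOf_subset_relinkBlock (Finset.mem_image_of_mem _ hv)⟩

lemma card_relinkBlock (hV : V ∈ α) :
    (relinkBlock β V).card = if SpecialBlock β V then V.card else V.card + 1 := by
  have himage : (V.image (permOf β)).card = V.card :=
    Finset.card_image_of_injOn ((hβ.injOn_permOf_ground).mono fun _ hv => hα.2.1 V hV hv)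
  unfold relinkBlock
  split
  · exact himage
  · next hns =>
    rw [Finset.card_insert_of_notMem, himage]
    intro hmem
    obtain ⟨v, hv, hpv⟩ := Finset.mem_image.1 hmem
    have := lt_permOf_of_not_special hα hβ hll hV hns hv
    have := fmin_le hv
    omega

end Relink

section RelinkNCL
variable {F : Finset ℕ} {α β : Finset (Finset ℕ)} {V V' W : Finset ℕ} {x y : ℕ}
variable (hα : IsPartitionOfSet F α) (hβ : IsPartitionOfSet F β)

include hα hβ in
lemma relinkBlock_inter_cases (hV : V ∈ α) (hV' : V' ∈ α) (hne : V ≠ V')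
    (hx : x ∈ relinkBlock β V) (hx' : x ∈ relinkBlock β V') :
    (¬ SpecialBlock β V ∧ x = fmin V ∧ ∃ v' ∈ V', permOf β v' = x) ∨
      (¬ SpecialBlock β V' ∧ x = fmin V' ∧ ∃ v ∈ V, permOf β v = x) := by
  rcases mem_relinkBlock hx with ⟨v, hv, hvx⟩ | ⟨hns, rfl⟩ <;>
    rcases mem_relinkBlock hx' with ⟨v', hv', hvx'⟩ | ⟨hns', hmin'⟩
  · obtain rfl : v = v' := hβ.injOn_permOf_ground (hα.2.1 V hV hv) (hα.2.1 V' hV' hv')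
      (hvx.trans hvx'.symm)
    exact absurd (hα.eq_of_mem hV hV' hv hv') hne
  · exact Or.inr ⟨hns', hmin', v, hv, hvx⟩
  · exact Or.inl ⟨hns, rfl, v', hv', hvx'⟩
  · exact absurd (hα.fmin_injOn hV hV' hmin') hne

variable (hll : LL α β)
include hα hβ hll

lemma eq_of_mem_inter_relinkBlock (hV : V ∈ α) (hV' : V' ∈ α) (hne : V ≠ V')
    (hx : x ∈ relinkBlock β V ∩ relinkBlock β V') (hy : y ∈ relinkBlock β V ∩ relinkBlock β V') :
    x = y := by
  rw [Finset.mem_inter] at hx hy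
  rcases relinkBlock_inter_cases hα hβ hV hV' hne hx.1 hx.2 with
      ⟨hns, rfl, v', hv', hpv'⟩ | ⟨hns, rfl, v, hv, hpv⟩ <;>
    rcases relinkBlock_inter_cases hα hβ hV hV' hne hy.1 hy.2 with
      ⟨hns2, rfl, w', hw', hpw'⟩ | ⟨hns2, rfl, w, hw, hpw⟩
  · rfl
  · -- `fmin V = P v'` and `fmin V' = P w` would make `fmin V ≤ w < fmin V' ≤ v' < fmin V`
    have := lt_permOf_of_not_special hα hβ hll hV' hns2 hv'
    have := lt_permOf_of_not_special hα hβ hll hV hns hw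
    have := fmin_le hv'
    have := fmin_le hw
    omega
  · have := lt_permOf_of_not_special hα hβ hll hV hns2 hv
    have := lt_permOf_of_not_special hα hβ hll hV' hns hw'
    have := fmin_le hv
    have := fmin_le hw'
    omega
  · rfl

lemma two_le_card_relinkBlock (hV : V ∈ α) (hV' : V' ∈ α) (hne : V ≠ V')
    (hx : x ∈ relinkBlock β V ∩ relinkBlock β V') : 2 ≤ (relinkBlock β V).card := by
  rw [Finset.mem_inter] at hx
  rcases relinkBlock_inter_cases hα hβ hV hV' hne hx.1 hx.2 with
      ⟨hns, -⟩ | ⟨-, rfl, -⟩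
  · rw [card_relinkBlock hα hβ hll hV, if_neg hns]
    have := Finset.card_pos.2 (hα.1 V hV)
    omega
  · exact Finset.one_lt_card.2 ⟨_, hx.1, fmin V, fmin_mem_relinkBlock hα hβ hll hV,
      fun h => hne (hα.fmin_injOn hV hV' h.symm)⟩

lemma relinkBlock_linked (hV : V ∈ α) (hV' : V' ∈ α) (hne : V ≠ V') :
    relinkBlock β V ∩ relinkBlock β V' = ∅ ∨
      (2 ≤ (relinkBlock β V).card ∧ 2 ≤ (relinkBlock β V').card ∧
        (relinkBlock β V ∩ relinkBlock β V').card = 1 ∧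
        fmin (relinkBlock β V) ≠ fmin (relinkBlock β V') ∧
        ∀ x ∈ relinkBlock β V ∩ relinkBlock β V',
          x = fmin (relinkBlock β V) ∨ x = fmin (relinkBlock β V')) := by
  rcases Finset.eq_empty_or_nonempty (relinkBlock β V ∩ relinkBlock β V') with h | ⟨x, hx⟩
  · exact Or.inl h
  rw [fmin_relinkBlock hα hβ hll hV, fmin_relinkBlock hα hβ hll hV']
  refine Or.inr ⟨two_le_card_relinkBlock hα hβ hll hV hV' hne hx,
    two_le_card_relinkBlock hα hβ hll hV' hV hne.symm (by rwa [Finset.inter_comm] at hx),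
    Finset.card_eq_one.2 ⟨x, Finset.eq_singleton_iff_unique_mem.2
      ⟨hx, fun y hy => eq_of_mem_inter_relinkBlock hα hβ hll hV hV' hne hy hx⟩⟩,
    fun h => hne (hα.fmin_injOn hV hV' h), fun y hy => ?_⟩
  rw [Finset.mem_inter] at hy
  rcases relinkBlock_inter_cases hα hβ hV hV' hne hy.1 hy.2 with ⟨-, h, -⟩ | ⟨-, h, -⟩
  · exact Or.inl h
  · exact Or.inr h

lemma relinkBlock_injOn (hV : V ∈ α) (hV' : V' ∈ α) (h : relinkBlock β V = relinkBlock β V') :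
    V = V' := by
  apply hα.fmin_injOn hV hV'
  rw [← fmin_relinkBlock hα hβ hll hV, ← fmin_relinkBlock hα hβ hll hV', h]

end RelinkNCL

section RelinkNCL
variable {F : Finset ℕ} {α β : Finset (Finset ℕ)} {V V' W : Finset ℕ} {m x : ℕ}
variable (hα : IsPartitionOfSet F α) (hβ : IsPartitionOfSet F β) (hll : LL α β)
include hα hβ hll

lemma exists_origin (hV : V ∈ α) (hW : W ∈ β) (hsub : V ⊆ W) (hx : x ∈ relinkBlock β V) :
    ∃ o ∈ V, o ≤ x ∧ ∀ u ∈ W, u < x → u ≤ o := by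
  by_cases hxV : x ∈ V
  · exact ⟨x, hxV, le_rfl, fun u _ h => h.le⟩
  rcases mem_relinkBlock hx with ⟨v, hv, rfl⟩ | ⟨-, rfl⟩
  · have hvmax : v ≠ fmax W := by
      rintro rfl
      obtain ⟨h1, -⟩ := (specialBlock_iff hα hβ hV hW hsub).1
        (specialBlock_of_mem_fmin_or_fmax hα hβ hll hV hW (Or.inr hv))
      exact hxV (by rw [hβ.permOf_fmax hW, ← h1]; exact fmin_mem ⟨_, hv⟩)
    rw [hβ.permOf_eq hW (hsub hv)] at hxV ⊢
    exact ⟨v, hv, (lt_nextInBlock (hsub hv) hvmax).le, fun u hu hlt =>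
      not_lt.1 fun hvu => (nextInBlock_le hvmax hu hvu).not_gt hlt⟩
  · exact absurd (fmin_mem (hα.1 V hV)) hxV

lemma relink_not_crossing (hαnc : ¬ IsCrossing α) (hβnc : ¬ IsCrossing β) :
    ¬ IsCrossing (relink β α) := by
  rintro ⟨_, hA, _, hB, hAB, a, haA, b, hbB, c, hcA, d, hdB, hab, hbc, hcd⟩
  obtain ⟨V, hV, rfl⟩ := Finset.mem_image.1 hA
  obtain ⟨V', hV', rfl⟩ := Finset.mem_image.1 hB
  have hne : V ≠ V' := fun h => hAB (h ▸ rfl)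
  obtain ⟨W, hW, hsub⟩ := hll.1 V hV
  obtain ⟨W', hW', hsub'⟩ := hll.1 V' hV'
  have hsubW := relinkBlock_subset hα hβ hV hW hsub
  have hsubW' := relinkBlock_subset hα hβ hV' hW' hsub'
  rcases eq_or_ne W W' with rfl | hWne
  swap
  · exact hβnc ⟨W, hW, W', hW', hWne, a, hsubW haA, b, hsubW' hbB, c, hsubW hcA, d, hsubW' hdB,
      hab, hbc, hcd⟩
  obtain ⟨oa, hoa, hoa1, -⟩ := exists_origin hα hβ hll hV hW hsub haA
  obtain ⟨ob, hob, hob1, hob2⟩ := exists_origin hα hβ hll hV' hW hsub' hbB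
  obtain ⟨oc, hoc, hoc1, hoc2⟩ := exists_origin hα hβ hll hV hW hsub hcA
  obtain ⟨od, hod, -, hod2⟩ := exists_origin hα hβ hll hV' hW hsub' hdB
  -- origins are weakly monotone, and strictly so between the disjoint blocks `V` and `V'`
  have hdisj : ∀ {o}, o ∈ V → o ∉ V' := fun ho ho' => hne (hα.eq_of_mem hV hV' ho ho')
  have h1 : oa < ob := (hoa1.trans (hob2 a (hsubW haA) hab)).lt_of_ne fun h => hdisj hoa (h ▸ hob)
  have h2 : ob < oc :=
    (hob1.trans (hoc2 b (hsubW' hbB) hbc)).lt_of_ne fun h => hdisj hoc (h ▸ hob)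
  have h3 : oc < od := (hoc1.trans (hod2 c (hsubW hcA) hcd)).lt_of_ne fun h => hdisj hoc (h ▸ hod)
  exact hαnc ⟨V, hV, V', hV', hne, oa, hoa, ob, hob, oc, hoc, od, hod, h1, h2, h3⟩

omit hll in
lemma exists_mem_relinkBlock (hm : m ∈ F) : ∃ V ∈ α, m ∈ relinkBlock β V := by
  obtain ⟨W, hW, hmW⟩ := hβ.2.2.1 m hm
  obtain ⟨V, hV, hV'⟩ := hα.2.2.1 _ (hβ.2.1 W hW (hβ.permOfInv_mem hW hmW))
  exact ⟨V, hV, image_permOf_subset_relinkBlock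
    (Finset.mem_image.2 ⟨_, hV', hβ.permOf_permOfInv hW hmW⟩)⟩

lemma relink_isLinkedPartitionOfSet : IsLinkedPartitionOfSet F (relink β α) := by
  refine ⟨?_, ?_, fun m hm => ?_, ?_⟩
  · rintro _ hA
    obtain ⟨V, hV, rfl⟩ := Finset.mem_image.1 hA
    exact ⟨_, fmin_mem_relinkBlock hα hβ hll hV⟩
  · rintro _ hA
    obtain ⟨V, hV, rfl⟩ := Finset.mem_image.1 hA
    obtain ⟨W, hW, hsub⟩ := hll.1 V hV
    exact (relinkBlock_subset hα hβ hV hW hsub).trans (hβ.2.1 W hW)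
  · obtain ⟨V, hV, hmV⟩ := exists_mem_relinkBlock hα hβ hm
    exact ⟨_, relinkBlock_mem_relink hV, hmV⟩
  · rintro _ hA _ hB hne
    obtain ⟨V, hV, rfl⟩ := Finset.mem_image.1 hA
    obtain ⟨V', hV', rfl⟩ := Finset.mem_image.1 hB
    exact relinkBlock_linked hα hβ hll hV hV' fun h => hne (h ▸ rfl)

end RelinkNCL

lemma IsLinkedPartitionOfSet.sup_id_eq {F : Finset ℕ} {π : Finset (Finset ℕ)}
    (h : IsLinkedPartitionOfSet F π) : π.sup id = F := by
  ext x
  rw [Finset.mem_sup]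
  exact ⟨fun ⟨A, hA, hx⟩ => h.2.1 A hA hx, fun hx => h.2.2.1 x hx⟩

lemma IsLinkedPartitionOfSet.genPart_eq {F : Finset ℕ} {π : Finset (Finset ℕ)}
    (h : IsLinkedPartitionOfSet F π) : genPart π = F.image (component F π) := by
  rw [genPart_eq_image_component, h.sup_id_eq]

noncomputable def unlinkBlock (π : Finset (Finset ℕ)) (A : Finset ℕ) : Finset ℕ :=
  if SinglyCovered π (fmin A) then A else A.erase (fmin A)

lemma unlink_eq_image (π : Finset (Finset ℕ)) : unlink π = π.image (unlinkBlock π) := rfl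

section RelinkInverse
variable {F : Finset ℕ} {α β : Finset (Finset ℕ)} {V W : Finset ℕ} {m x : ℕ}
variable (hα : IsPartitionOfSet F α) (hβ : IsPartitionOfSet F β) (hll : LL α β)
include hα hβ hll

lemma exists_fmin_lt_fmin_mem_relinkBlock (hV : V ∈ α) (hns : ¬ SpecialBlock β V) :
    ∃ V' ∈ α, fmin V' < fmin V ∧ fmin V ∈ relinkBlock β V' := by
  obtain ⟨W, hW, hsub⟩ := hll.1 V hV
  have hVW : fmin V ∈ W := hsub (fmin_mem (hα.1 V hV))
  have hlt := hβ.permOfInv_lt hW hVW (fmin_lt_of_not_special hα hβ hll hV hW hsub hns).ne'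
  obtain ⟨V', hV', hqV'⟩ := hα.2.2.1 _ (hβ.2.1 W hW (hβ.permOfInv_mem hW hVW))
  exact ⟨V', hV', (fmin_le hqV').trans_lt hlt, image_permOf_subset_relinkBlock
    (Finset.mem_image.2 ⟨_, hqV', hβ.permOf_permOfInv hW hVW⟩)⟩

lemma connected_fmin_of_mem_relinkBlock (hW : W ∈ β) (hV : V ∈ α) (hsub : V ⊆ W)
    (hx : x ∈ relinkBlock β V) : Connected (relink β α) (fmin W) x := by
  induction hk : fmin V using Nat.strong_induction_on generalizing V x with
  | _ k ih =>
  have hψV := relinkBlock_mem_relink (β := β) hV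
  by_cases hsp : SpecialBlock β V
  · obtain ⟨h1, -⟩ := (specialBlock_iff hα hβ hV hW hsub).1 hsp
    exact connected_of_mem hψV (h1 ▸ fmin_mem_relinkBlock hα hβ hll hV) hx
  · obtain ⟨V', hV', hlt, hmem⟩ := exists_fmin_lt_fmin_mem_relinkBlock hα hβ hll hV hsp
    obtain ⟨W', hW', hsub'⟩ := hll.1 V' hV'
    obtain rfl : W' = W := hβ.eq_of_mem hW' hW (relinkBlock_subset hα hβ hV' hW' hsub' hmem)
      (hsub (fmin_mem (hα.1 V hV)))
    exact (ih _ (hk ▸ hlt) hV' hsub' hmem rfl).trans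
      (connected_of_mem hψV (fmin_mem_relinkBlock hα hβ hll hV) hx)

lemma connected_fmin_of_mem (hW : W ∈ β) (hx : x ∈ W) : Connected (relink β α) (fmin W) x := by
  obtain ⟨V, hV, hxV⟩ := exists_mem_relinkBlock hα hβ (hβ.2.1 W hW hx)
  obtain ⟨W', hW', hsub⟩ := hll.1 V hV
  obtain rfl := hβ.eq_of_mem hW' hW (relinkBlock_subset hα hβ hV hW' hsub hxV) hx
  exact connected_fmin_of_mem_relinkBlock hα hβ hll hW' hV hsub hxV

lemma component_relink (hW : W ∈ β) (hm : m ∈ W) : component F (relink β α) m = W := by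
  ext y
  rw [mem_component]
  refine ⟨fun hy => hy.2.induction (P := (· ∈ W)) ?_ hm, fun hy =>
    ⟨hβ.2.1 W hW hy, (connected_fmin_of_mem hα hβ hll hW hm).symm.trans
      (connected_fmin_of_mem hα hβ hll hW hy)⟩⟩
  rintro u v hu ⟨_, hA, huA, hvA⟩
  obtain ⟨V, hV, rfl⟩ := Finset.mem_image.1 hA
  obtain ⟨W', hW', hsub⟩ := hll.1 V hV
  have hsubW := relinkBlock_subset hα hβ hV hW' hsub
  obtain rfl := hβ.eq_of_mem hW' hW (hsubW huA) hu
  exact hsubW hvA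

lemma genPart_relink : genPart (relink β α) = β := by
  rw [(relink_isLinkedPartitionOfSet hα hβ hll).genPart_eq]
  ext X
  rw [Finset.mem_image]
  constructor
  · rintro ⟨m, hm, rfl⟩
    obtain ⟨W, hW, hmW⟩ := hβ.2.2.1 m hm
    rwa [component_relink hα hβ hll hW hmW]
  · intro hX
    obtain ⟨m, hm⟩ := hβ.1 X hX
    exact ⟨m, hβ.2.1 X hX hm, component_relink hα hβ hll hX hm⟩

lemma singlyCovered_relink_iff (hV : V ∈ α) :
    SinglyCovered (relink β α) (fmin V) ↔ SpecialBlock β V := by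
  rw [singlyCovered_iff (relinkBlock_mem_relink hV) (fmin_mem_relinkBlock hα hβ hll hV)]
  constructor
  · intro h
    by_contra hns
    obtain ⟨V', hV', hlt, hmem⟩ := exists_fmin_lt_fmin_mem_relinkBlock hα hβ hll hV hns
    have := relinkBlock_injOn hα hβ hll hV' hV (h _ (relinkBlock_mem_relink hV') hmem)
    exact hlt.ne (congrArg fmin this)
  · rintro hsp _ hA hmem
    obtain ⟨V', hV', rfl⟩ := Finset.mem_image.1 hA
    by_contra hne
    have hVV' : V ≠ V' := fun h => hne (h ▸ rfl)
    rcases relinkBlock_inter_cases hα hβ hV hV' hVV' (fmin_mem_relinkBlock hα hβ hll hV) hmem with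
      ⟨hns, -⟩ | ⟨-, h, -⟩
    · exact hns hsp
    · exact hVV' (hα.fmin_injOn hV hV' h)

lemma unlink_relink : unlink (relink β α) = α.image (Finset.image (permOf β)) := by
  rw [unlink_eq_image, relink, Finset.image_image]
  refine Finset.image_congr fun V hV => ?_
  change unlinkBlock (relink β α) (relinkBlock β V) = V.image (permOf β)
  rw [unlinkBlock, fmin_relinkBlock hα hβ hll hV, singlyCovered_relink_iff hα hβ hll hV]
  by_cases hsp : SpecialBlock β V
  · rw [if_pos hsp, relinkBlock, if_pos hsp]
  · rw [if_neg hsp, relinkBlock, if_neg hsp]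
    refine Finset.erase_insert fun hmem => ?_
    obtain ⟨v, hv, hpv⟩ := Finset.mem_image.1 hmem
    have := lt_permOf_of_not_special hα hβ hll hV hsp hv
    have := fmin_le hv
    omega

lemma cycUnlink_relink : cycUnlink (relink β α) = α := by
  rw [cycUnlink, genPart_relink hα hβ hll, unlink_relink hα hβ hll, mapPart, Finset.image_image]
  refine (Finset.image_congr fun V hV => ?_).trans Finset.image_id
  obtain ⟨W, hW, hsub⟩ := hll.1 V hV
  simp only [Function.comp_apply, Finset.image_image, id]
  exact (Finset.image_congr fun v hv => hβ.permOfInv_permOf hW (hsub hv)).trans Finset.image_id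

end RelinkInverse

lemma unlinkBlock_subset (π : Finset (Finset ℕ)) (A : Finset ℕ) : unlinkBlock π A ⊆ A := by
  unfold unlinkBlock
  split
  · exact Finset.Subset.refl _
  · exact Finset.erase_subset _ _

lemma fmin_mem_unlinkBlock_iff {π : Finset (Finset ℕ)} {A : Finset ℕ} :
    fmin A ∈ unlinkBlock π A ↔ A.Nonempty ∧ SinglyCovered π (fmin A) := by
  unfold unlinkBlock
  split
  · next h => exact ⟨fun hA => ⟨⟨_, hA⟩, h⟩, fun hA => fmin_mem hA.1⟩
  · next h => simp [h]

lemma mem_unlinkBlock_of_ne_fmin {π : Finset (Finset ℕ)} {A : Finset ℕ} {m : ℕ} (hm : m ∈ A)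
    (hne : m ≠ fmin A) : m ∈ unlinkBlock π A := by
  unfold unlinkBlock
  split
  · exact hm
  · exact Finset.mem_erase.2 ⟨hne, hm⟩

namespace IsLinkedPartitionOfSet
variable {F : Finset ℕ} {π : Finset (Finset ℕ)} {A A' : Finset ℕ} {m x : ℕ}
variable (hlp : IsLinkedPartitionOfSet F π)
include hlp

lemma genPart_isPartitionOfSet : IsPartitionOfSet F (genPart π) := by
  rw [hlp.genPart_eq]
  refine ⟨?_, ?_, fun m hm => ⟨_, Finset.mem_image_of_mem _ hm, mem_component_self hm⟩, ?_⟩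
  · simp only [Finset.forall_mem_image]
    exact fun m hm => ⟨m, mem_component_self hm⟩
  · simp only [Finset.forall_mem_image]
    exact fun m _ => Finset.filter_subset _ _
  · simp only [Finset.forall_mem_image]
    intro m _ m' _ hne
    refine Finset.eq_empty_of_forall_notMem fun x hx => hne ?_
    rw [Finset.mem_inter] at hx
    rw [← component_eq_of_mem hx.1, component_eq_of_mem hx.2]

lemma component_mem_genPart (hm : m ∈ F) : component F π m ∈ genPart π := by
  rw [hlp.genPart_eq]; exact Finset.mem_image_of_mem _ hm

lemma genPart_not_crossing (hnc : ¬ IsCrossing π) : ¬ IsCrossing (genPart π) := by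
  rintro ⟨X, hX, Y, hY, hXY, a, haX, b, hbY, c, hcX, d, hdY, hab, hbc, hcd⟩
  rw [hlp.genPart_eq] at hX hY
  obtain ⟨m, -, rfl⟩ := Finset.mem_image.1 hX
  obtain ⟨m', -, rfl⟩ := Finset.mem_image.1 hY
  have hac := (mem_component.1 haX).2.symm.trans (mem_component.1 hcX).2
  have hbd := (mem_component.1 hbY).2.symm.trans (mem_component.1 hdY).2
  apply hXY
  rw [← component_eq_of_mem haX, ← component_eq_of_mem hbY]
  ext y
  simp only [mem_component]
  have hab' := connected_of_interleaved hnc hac hbd hab hbc hcd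
  exact ⟨fun ⟨hy, h⟩ => ⟨hy, hab'.symm.trans h⟩, fun ⟨hy, h⟩ => ⟨hy, hab'.trans h⟩⟩

lemma not_mem_unlinkBlock_of_ne (hA : A ∈ π) (hA' : A' ∈ π) (hne : A ≠ A')
    (hx : x ∈ unlinkBlock π A) : x ∉ unlinkBlock π A' := by
  intro hx'
  have hxA := unlinkBlock_subset π A hx
  have hxA' := unlinkBlock_subset π A' hx'
  have hnot : ∀ {B B'}, B ∈ π → B' ∈ π → B ≠ B' → x ∈ B' → x = fmin B → x ∉ unlinkBlock π B :=
    fun hB hB' hBB' hxB' h hxB => by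
      obtain ⟨-, hsc⟩ := fmin_mem_unlinkBlock_iff.1 (h ▸ hxB)
      exact hBB' ((singlyCovered_iff hB (h ▸ unlinkBlock_subset π _ hxB)).1 hsc _ hB'
        (h ▸ hxB')).symm
  rcases (hlp.linked_of_mem hA hA' hne hxA hxA').2.2.2 with h | h
  · exact hnot hA hA' hne hxA' h hx
  · exact hnot hA' hA hne.symm hxA h hx'

lemma exists_mem_unlinkBlock (hm : m ∈ F) : ∃ A ∈ π, m ∈ unlinkBlock π A := by
  obtain ⟨A, hA, hmA⟩ := hlp.2.2.1 m hm
  by_cases hsc : SinglyCovered π m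
  · refine ⟨A, hA, ?_⟩
    unfold unlinkBlock
    split
    · exact hmA
    · next hns => exact Finset.mem_erase.2 ⟨fun h => hns (h ▸ hsc), hmA⟩
  · obtain ⟨B, hB, hmB, hBA⟩ := exists_ne_of_not_singlyCovered hA hmA hsc
    obtain ⟨-, -, hmin, hor⟩ := hlp.linked_of_mem hA hB hBA.symm hmA hmB
    rcases hor with h | h
    · exact ⟨B, hB, mem_unlinkBlock_of_ne_fmin hmB fun h' => hmin (h ▸ h')⟩
    · exact ⟨A, hA, mem_unlinkBlock_of_ne_fmin hmA fun h' => hmin (h' ▸ h)⟩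

lemma unlinkBlock_nonempty (hA : A ∈ π) : (unlinkBlock π A).Nonempty := by
  unfold unlinkBlock
  split
  · exact hlp.1 A hA
  · next hns =>
    have hmA := fmin_mem (hlp.1 A hA)
    obtain ⟨B, hB, hmB, hBA⟩ := exists_ne_of_not_singlyCovered hA hmA hns
    have := (hlp.linked_of_mem hA hB hBA.symm hmA hmB).1
    rw [← Finset.card_pos, Finset.card_erase_of_mem hmA]
    omega

end IsLinkedPartitionOfSet

noncomputable def cycBlock (π : Finset (Finset ℕ)) (A : Finset ℕ) : Finset ℕ :=
  (unlinkBlock π A).image (permOfInv (genPart π))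

lemma cycUnlink_eq_image (π : Finset (Finset ℕ)) : cycUnlink π = π.image (cycBlock π) := by
  rw [cycUnlink, unlink_eq_image, mapPart, Finset.image_image]
  rfl

namespace IsLinkedPartitionOfSet
variable {F : Finset ℕ} {π : Finset (Finset ℕ)} {A : Finset ℕ} {m x : ℕ}
variable (hlp : IsLinkedPartitionOfSet F π)
include hlp

lemma fmin_mem_ground (hA : A ∈ π) : fmin A ∈ F := hlp.2.1 A hA (fmin_mem (hlp.1 A hA))

lemma fmin_mem_component (hA : A ∈ π) : fmin A ∈ component F π (fmin A) :=
  mem_component_self (hlp.fmin_mem_ground hA)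

lemma component_fmin_mem_genPart (hA : A ∈ π) : component F π (fmin A) ∈ genPart π :=
  hlp.component_mem_genPart (hlp.fmin_mem_ground hA)

lemma subset_component_fmin (hA : A ∈ π) : A ⊆ component F π (fmin A) :=
  hlp.subset_component hA (fmin_mem (hlp.1 A hA))

lemma cycBlock_subset (hA : A ∈ π) : cycBlock π A ⊆ component F π (fmin A) := by
  intro x hx
  obtain ⟨y, hy, rfl⟩ := Finset.mem_image.1 hx
  exact hlp.genPart_isPartitionOfSet.permOfInv_mem (hlp.component_fmin_mem_genPart hA)
    (hlp.subset_component_fmin hA (unlinkBlock_subset π A hy))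

lemma fmin_component_of_singlyCovered (hA : A ∈ π) (hsc : SinglyCovered π (fmin A)) :
    fmin (component F π (fmin A)) = fmin A := by
  have hK := hlp.fmin_mem_component hA
  refine le_antisymm (fmin_le hK) (hlp.fmin_le_of_connected hA ?_
    (mem_component.1 (fmin_mem ⟨_, hK⟩)).2)
  exact (singlyCovered_iff hA (fmin_mem (hlp.1 A hA))).1 hsc

lemma singlyCovered_fmin_component (hm : m ∈ F) (hA : A ∈ π)
    (hmem : fmin (component F π m) ∈ A) : SinglyCovered π (fmin (component F π m)) := by
  have hK : fmin (component F π m) ∈ component F π m := fmin_mem ⟨m, mem_component_self hm⟩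
  have hroot : fmin (component F π (fmin (component F π m))) = fmin (component F π m) := by
    rw [component_eq_of_mem hK]
  exact (singlyCovered_iff hA hmem).2 fun B hB hmB =>
    hlp.eq_of_mem_of_fmin_component hroot hB hA hmB hmem

lemma exists_fmin_eq_fmin_component (hm : m ∈ F) :
    ∃ A ∈ π, fmin A = fmin (component F π m) ∧ SinglyCovered π (fmin A) := by
  have hK : fmin (component F π m) ∈ component F π m := fmin_mem ⟨m, mem_component_self hm⟩
  obtain ⟨A, hA, hmA⟩ := hlp.2.2.1 _ ((mem_component.1 hK).1)
  have hsub : A ⊆ component F π m := component_eq_of_mem hK ▸ hlp.subset_component hA hmA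
  have hmin : fmin A = fmin (component F π m) :=
    le_antisymm (fmin_le hmA) (fmin_le (hsub (fmin_mem ⟨_, hmA⟩)))
  exact ⟨A, hA, hmin, hmin ▸ hlp.singlyCovered_fmin_component hm hA hmA⟩

lemma fmin_ne_fmax_component (hA : A ∈ π) (hns : ¬ SinglyCovered π (fmin A)) :
    fmin A ≠ fmax (component F π (fmin A)) := by
  have hmA := fmin_mem (hlp.1 A hA)
  obtain ⟨B, hB, hmB, hBA⟩ := exists_ne_of_not_singlyCovered hA hmA hns
  obtain ⟨x, hx, hxm⟩ := Finset.exists_mem_ne (hlp.linked_of_mem hA hB hBA.symm hmA hmB).1 (fmin A)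
  have := le_fmax (hlp.subset_component_fmin hA hx)
  have := fmin_lt_of_mem_of_ne hx hxm
  omega

end IsLinkedPartitionOfSet

namespace IsLinkedPartitionOfSet
variable {F : Finset ℕ} {π : Finset (Finset ℕ)} {A : Finset ℕ} {x y : ℕ}
variable (hlp : IsLinkedPartitionOfSet F π)
include hlp

lemma permOfInv_genPart (hA : A ∈ π) (hy : y ∈ component F π (fmin A)) :
    permOfInv (genPart π) y = prevInBlock (component F π (fmin A)) y :=
  hlp.genPart_isPartitionOfSet.permOfInv_eq
    (hlp.component_fmin_mem_genPart hA) hy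

lemma fmin_le_of_mem_cycBlock (hA : A ∈ π) (hx : x ∈ cycBlock π A) : fmin A ≤ x := by
  set K := component F π (fmin A)
  obtain ⟨y, hy, rfl⟩ := Finset.mem_image.1 hx
  have hyA := unlinkBlock_subset π A hy
  have hmK := hlp.fmin_mem_component hA
  rw [hlp.permOfInv_genPart hA (hlp.subset_component_fmin hA hyA)]
  by_cases hyK : y = fmin K
  · rw [hyK, prevInBlock_fmin]
    exact le_fmax hmK
  have hlt : fmin A < y := by
    refine (fmin_le hyA).lt_of_ne fun h => hyK ?_
    obtain ⟨-, hsc⟩ := fmin_mem_unlinkBlock_iff.1 (h ▸ hy)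
    rw [← h, hlp.fmin_component_of_singlyCovered hA hsc]
  exact le_prevInBlock hyK hmK hlt

variable (hnc : ¬ IsCrossing π)
include hnc

lemma fmin_mem_cycBlock (hA : A ∈ π) : fmin A ∈ cycBlock π A := by
  set K := component F π (fmin A)
  have hmK := hlp.fmin_mem_component hA
  by_cases hmax : fmin A = fmax K
  · -- then `A` is the root of a one-element component
    have hsc : SinglyCovered π (fmin A) := by
      by_contra hns
      exact hlp.fmin_ne_fmax_component hA hns hmax
    refine Finset.mem_image.2 ⟨fmin A, fmin_mem_unlinkBlock_iff.2 ⟨hlp.1 A hA, hsc⟩, ?_⟩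
    have hroot : fmin K = fmin A := hlp.fmin_component_of_singlyCovered hA hsc
    calc permOfInv (genPart π) (fmin A) = prevInBlock K (fmin K) := by
          rw [hlp.permOfInv_genPart hA hmK, hroot]
      _ = fmin A := by rw [prevInBlock_fmin, hmax]
  · have hz := hlp.nextInBlock_component_fmin_mem hnc hA hmax
    refine Finset.mem_image.2 ⟨_, mem_unlinkBlock_of_ne_fmin hz (lt_nextInBlock hmK hmax).ne', ?_⟩
    rw [hlp.permOfInv_genPart hA (nextInBlock_mem hmK), prevInBlock_nextInBlock hmK]

lemma fmin_cycBlock (hA : A ∈ π) : fmin (cycBlock π A) = fmin A :=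
  fmin_eq_of_forall_le (hlp.fmin_mem_cycBlock hnc hA) fun _ hx => hlp.fmin_le_of_mem_cycBlock hA hx

lemma specialBlock_cycBlock_iff (hA : A ∈ π) :
    SpecialBlock (genPart π) (cycBlock π A) ↔ SinglyCovered π (fmin A) := by
  set K := component F π (fmin A)
  have hG := hlp.genPart_isPartitionOfSet
  have hKG : K ∈ genPart π := hlp.component_fmin_mem_genPart hA
  have hmK := hlp.fmin_mem_component hA
  have hne : (cycBlock π A).Nonempty := ⟨_, hlp.fmin_mem_cycBlock hnc hA⟩
  constructor
  · rintro ⟨W, hW, h1, h2⟩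
    obtain rfl : W = K := hG.eq_of_mem hW hKG (fmin_mem (hG.1 W hW))
      (h1 ▸ (hlp.fmin_cycBlock hnc hA).symm ▸ hmK)
    obtain ⟨y, hy, hyx⟩ := Finset.mem_image.1 (h2 ▸ fmax_mem hne)
    have hyA := unlinkBlock_subset π A hy
    have hyK := hG.eq_fmin_of_permOfInv_eq_fmax hKG (hlp.subset_component_fmin hA hyA) hyx
    have hroot : fmin A = fmin K := le_antisymm (fmin_le (hyK ▸ hyA)) (fmin_le hmK)
    exact hroot ▸ hlp.singlyCovered_fmin_component (hlp.fmin_mem_ground hA) hA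
      (hyK ▸ hyA)
  · intro hsc
    have hroot : fmin K = fmin A := hlp.fmin_component_of_singlyCovered hA hsc
    have hmax : fmax K ∈ cycBlock π A := Finset.mem_image.2 ⟨fmin A,
      fmin_mem_unlinkBlock_iff.2 ⟨hlp.1 A hA, hsc⟩, hroot ▸ hG.permOfInv_fmin hKG⟩
    exact ⟨K, hKG, (hlp.fmin_cycBlock hnc hA).trans hroot.symm,
      fmax_eq_of_forall_le hmax fun _ hb => le_fmax (hlp.cycBlock_subset hA hb)⟩

omit hnc in
lemma image_permOf_cycBlock (hA : A ∈ π) :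
    (cycBlock π A).image (permOf (genPart π)) = unlinkBlock π A := by
  rw [cycBlock, Finset.image_image]
  refine (Finset.image_congr fun y hy => ?_).trans Finset.image_id
  exact hlp.genPart_isPartitionOfSet.permOf_permOfInv
    (hlp.component_fmin_mem_genPart hA)
    (hlp.subset_component_fmin hA (unlinkBlock_subset π A hy))

lemma relinkBlock_cycBlock (hA : A ∈ π) : relinkBlock (genPart π) (cycBlock π A) = A := by
  rw [relinkBlock, hlp.specialBlock_cycBlock_iff hnc hA, hlp.image_permOf_cycBlock hA,
    hlp.fmin_cycBlock hnc hA, unlinkBlock]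
  by_cases hsc : SinglyCovered π (fmin A)
  · simp only [hsc, if_true]
  · simp only [hsc, if_false]
    exact Finset.insert_erase (fmin_mem (hlp.1 A hA))

lemma relink_cycUnlink : relink (genPart π) (cycUnlink π) = π := by
  rw [relink, cycUnlink_eq_image, Finset.image_image]
  exact (Finset.image_congr fun A hA => hlp.relinkBlock_cycBlock hnc hA).trans Finset.image_id

end IsLinkedPartitionOfSet

namespace IsLinkedPartitionOfSet
variable {F : Finset ℕ} {π : Finset (Finset ℕ)} {A : Finset ℕ} {x : ℕ}
variable (hlp : IsLinkedPartitionOfSet F π)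
include hlp

lemma cycUnlink_isPartitionOfSet : IsPartitionOfSet F (cycUnlink π) := by
  have hG := hlp.genPart_isPartitionOfSet
  rw [cycUnlink_eq_image]
  refine ⟨?_, ?_, fun m hm => ?_, ?_⟩
  · simp only [Finset.forall_mem_image]
    intro A hA
    obtain ⟨y, hy⟩ := hlp.unlinkBlock_nonempty hA
    exact ⟨_, Finset.mem_image_of_mem _ hy⟩
  · simp only [Finset.forall_mem_image]
    intro A hA
    exact (hlp.cycBlock_subset hA).trans (Finset.filter_subset _ _)
  · obtain ⟨W, hW, hmW⟩ := hG.2.2.1 m hm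
    obtain ⟨A, hA, hA'⟩ := hlp.exists_mem_unlinkBlock (hG.2.1 W hW (hG.permOf_mem hW hmW))
    exact ⟨_, Finset.mem_image_of_mem _ hA,
      Finset.mem_image.2 ⟨_, hA', hG.permOfInv_permOf hW hmW⟩⟩
  · simp only [Finset.forall_mem_image]
    intro A hA A' hA' hne
    have hAA' : A ≠ A' := fun h => hne (h ▸ rfl)
    refine Finset.eq_empty_of_forall_notMem fun x hx => ?_
    obtain ⟨y, hy, rfl⟩ := Finset.mem_image.1 (Finset.mem_inter.1 hx).1
    obtain ⟨y', hy', hyy'⟩ := Finset.mem_image.1 (Finset.mem_inter.1 hx).2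
    have hF : ∀ {B z}, B ∈ π → z ∈ unlinkBlock π B → z ∈ F :=
      fun hB hz => hlp.2.1 _ hB (unlinkBlock_subset π _ hz)
    obtain rfl := hG.injOn_permOfInv_ground (hF hA' hy') (hF hA hy) hyy'
    exact hlp.not_mem_unlinkBlock_of_ne hA hA' hAA' hy hy'

lemma exists_origin_cycBlock (hA : A ∈ π) (hx : x ∈ cycBlock π A) :
    ∃ y ∈ unlinkBlock π A, (y = fmin (component F π (fmin A)) ∧ x = fmax (component F π (fmin A)))
      ∨ (x < y ∧ ∀ u ∈ component F π (fmin A), x < u → y ≤ u) := by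
  set K := component F π (fmin A)
  obtain ⟨y, hy, rfl⟩ := Finset.mem_image.1 hx
  have hyK := hlp.subset_component_fmin hA (unlinkBlock_subset π A hy)
  refine ⟨y, hy, ?_⟩
  rw [hlp.permOfInv_genPart hA hyK]
  by_cases hmin : y = fmin K
  · exact Or.inl ⟨hmin, hmin ▸ prevInBlock_fmin K⟩
  · refine Or.inr ⟨prevInBlock_lt hyK hmin, fun u hu hlt => not_lt.1 fun huy => ?_⟩
    exact (le_prevInBlock hmin hu huy).not_gt hlt

lemma cycUnlink_not_crossing (hnc : ¬ IsCrossing π) : ¬ IsCrossing (cycUnlink π) := by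
  rintro ⟨_, hX, _, hY, hXY, a, haX, b, hbY, c, hcX, d, hdY, hab, hbc, hcd⟩
  rw [cycUnlink_eq_image] at hX hY
  obtain ⟨A, hA, rfl⟩ := Finset.mem_image.1 hX
  obtain ⟨A', hA', rfl⟩ := Finset.mem_image.1 hY
  have hne : A ≠ A' := fun h => hXY (h ▸ rfl)
  have hsub := hlp.cycBlock_subset hA
  have hsub' := hlp.cycBlock_subset hA'
  by_cases hKK : component F π (fmin A') = component F π (fmin A)
  swap
  · exact hlp.genPart_not_crossing hnc ⟨_, hlp.component_fmin_mem_genPart hA, _,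
      hlp.component_fmin_mem_genPart hA', Ne.symm hKK, a, hsub haX, b, hsub' hbY, c, hsub hcX, d,
      hsub' hdY, hab, hbc, hcd⟩
  rw [hKK] at hsub'
  have hdK := le_fmax (hsub' hdY)
  -- pulling `a < b < c < d` back to their origins keeps them interleaved, unless `d`'s wraps
  obtain ⟨ya, hya, ⟨-, rfl⟩ | ⟨ha1, ha2⟩⟩ := hlp.exists_origin_cycBlock hA haX
  · omega
  obtain ⟨yb, hyb, hb⟩ := hlp.exists_origin_cycBlock hA' hbY
  rw [hKK] at hb
  obtain ⟨-, rfl⟩ | ⟨hb1, hb2⟩ := hb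
  · omega
  obtain ⟨yc, hyc, ⟨-, rfl⟩ | ⟨hc1, hc2⟩⟩ := hlp.exists_origin_cycBlock hA hcX
  · omega
  have h1 : ya < yb := (ha2 b (hsub' hbY) hab).trans_lt hb1
  have h2 : yb < yc := (hb2 c (hsub hcX) hbc).trans_lt hc1
  have hmem : ∀ {B y}, y ∈ unlinkBlock π B → y ∈ B := fun hy => unlinkBlock_subset π _ hy
  obtain ⟨yd, hyd, hd⟩ := hlp.exists_origin_cycBlock hA' hdY
  rw [hKK] at hd
  obtain ⟨hwrap, -⟩ | ⟨hd1, -⟩ := hd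
  · -- the minimum of the component lies in the unlinked block of `A'`, left of everything
    have h0 : yd < ya := hwrap ▸ (fmin_le (hsub haX)).trans_lt ha1
    exact hnc ⟨A', hA', A, hA, hne.symm, yd, hmem hyd, ya, hmem hya, yb, hmem hyb, yc, hmem hyc,
      h0, h1, h2⟩
  · have h3 : yc < yd := (hc2 d (hsub' hdY) hcd).trans_lt hd1
    exact hnc ⟨A, hA, A', hA', hne, ya, hmem hya, yb, hmem hyb, yc, hmem hyc, yd, hmem hyd,
      h1, h2, h3⟩

lemma LL_cycUnlink_genPart (hnc : ¬ IsCrossing π) : LL (cycUnlink π) (genPart π) := by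
  refine ⟨fun X hX => ?_, fun W hW => ?_⟩
  · rw [cycUnlink_eq_image] at hX
    obtain ⟨A, hA, rfl⟩ := Finset.mem_image.1 hX
    exact ⟨_, hlp.component_fmin_mem_genPart hA,
      hlp.cycBlock_subset hA⟩
  · have hG := hlp.genPart_isPartitionOfSet
    rw [hlp.genPart_eq] at hW
    obtain ⟨m, hm, rfl⟩ := Finset.mem_image.1 hW
    obtain ⟨A, hA, hmin, hsc⟩ := hlp.exists_fmin_eq_fmin_component hm
    obtain ⟨W, hW, h1, h2⟩ := (hlp.specialBlock_cycBlock_iff hnc hA).2 hsc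
    have hK : component F π m ∈ genPart π := hlp.component_mem_genPart hm
    obtain rfl : W = component F π m := hG.eq_of_mem hW hK (fmin_mem (hG.1 W hW))
      (h1 ▸ (hlp.fmin_cycBlock hnc hA).trans hmin ▸ fmin_mem ⟨m, mem_component_self hm⟩)
    have hne : (cycBlock π A).Nonempty := ⟨_, hlp.fmin_mem_cycBlock hnc hA⟩
    exact ⟨cycBlock π A, by rw [cycUnlink_eq_image]; exact Finset.mem_image_of_mem _ hA,
      h1 ▸ fmin_mem hne, h2 ▸ fmax_mem hne⟩

end IsLinkedPartitionOfSet

lemma prod_relink {R : Type*} [CommMonoid R] (t : ℕ → R) {F : Finset ℕ} {α β : Finset (Finset ℕ)}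
    (hα : IsPartitionOfSet F α) (hβ : IsPartitionOfSet F β) (hll : LL α β) :
    ∏ A ∈ relink β α, t (A.card - 1) =
      (∏ U ∈ α.filter fun U => SpecialBlock β U, t (U.card - 1)) *
        ∏ V ∈ α.filter fun V => ¬ SpecialBlock β V, t V.card := by
  rw [relink, Finset.prod_image fun V hV V' hV' h => relinkBlock_injOn hα hβ hll hV hV' h,
    ← Finset.prod_filter_mul_prod_filter_not α (SpecialBlock β)]
  congr 1 <;> refine Finset.prod_congr rfl fun V hV => ?_ <;>
    obtain ⟨hV, hsp⟩ := Finset.mem_filter.1 hV <;>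
    simp [card_relinkBlock hα hβ hll hV, hsp]

lemma mem_NCLF {n : ℕ} {π : Finset (Finset ℕ)} : π ∈ NCLF n ↔ IsNCL n π := by
  rw [NCLF, Finset.mem_filter, Finset.mem_powerset]
  exact ⟨And.right, fun h => ⟨fun A hA => Finset.mem_powerset.2 (h.1.2.1 A hA), h⟩⟩

lemma mem_NCF {n : ℕ} {α : Finset (Finset ℕ)} : α ∈ NCF n ↔ IsNCPartition n α := by
  rw [NCF, Finset.mem_filter, Finset.mem_powerset]
  exact ⟨And.right, fun h => ⟨fun A hA => Finset.mem_powerset.2 (h.1.2.1 A hA), h⟩⟩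

lemma mem_LL_pairs {n : ℕ} {p : Finset (Finset ℕ) × Finset (Finset ℕ)} :
    p ∈ (NCF n ×ˢ NCF n).filter (fun p => LL p.1 p.2) ↔
      IsNCPartition n p.1 ∧ IsNCPartition n p.2 ∧ LL p.1 p.2 := by
  rw [Finset.mem_filter, Finset.mem_product, mem_NCF, mem_NCF, and_assoc]

lemma cycUnlink_genPart_mem {n : ℕ} {π : Finset (Finset ℕ)} (hπ : π ∈ NCLF n) :
    (cycUnlink π, genPart π) ∈ (NCF n ×ˢ NCF n).filter (fun p => LL p.1 p.2) := by
  obtain ⟨hlp, hnc⟩ := mem_NCLF.1 hπ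
  exact mem_LL_pairs.2 ⟨⟨hlp.cycUnlink_isPartitionOfSet, hlp.cycUnlink_not_crossing hnc⟩,
    ⟨hlp.genPart_isPartitionOfSet, hlp.genPart_not_crossing hnc⟩, hlp.LL_cycUnlink_genPart hnc⟩

lemma relink_mem_NCLF {n : ℕ} {p : Finset (Finset ℕ) × Finset (Finset ℕ)}
    (hp : p ∈ (NCF n ×ˢ NCF n).filter (fun p => LL p.1 p.2)) : relink p.2 p.1 ∈ NCLF n := by
  obtain ⟨hα, hβ, hll⟩ := mem_LL_pairs.1 hp
  exact mem_NCLF.2 ⟨relink_isLinkedPartitionOfSet hα.1 hβ.1 hll,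
    relink_not_crossing hα.1 hβ.1 hll hα.2 hβ.2⟩

lemma cycUnlink_genPart_relink {n : ℕ} {p : Finset (Finset ℕ) × Finset (Finset ℕ)}
    (hp : p ∈ (NCF n ×ˢ NCF n).filter (fun p => LL p.1 p.2)) :
    (cycUnlink (relink p.2 p.1), genPart (relink p.2 p.1)) = p := by
  obtain ⟨hα, hβ, hll⟩ := mem_LL_pairs.1 hp
  exact Prod.ext (cycUnlink_relink hα.1 hβ.1 hll) (genPart_relink hα.1 hβ.1 hll)

theorem stmt16_general {R : Type*} [CommRing R] (t : ℕ → R) (n : ℕ) :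
    ∑ π ∈ NCLF n, ∏ A ∈ π, t (A.card - 1)
      = ∑ p ∈ (NCF n ×ˢ NCF n).filter fun p => LL p.1 p.2,
          (∏ U ∈ p.1.filter fun U => SpecialBlock p.2 U, t (U.card - 1))
            * ∏ V ∈ p.1.filter fun V => ¬ SpecialBlock p.2 V, t V.card := by
  refine Finset.sum_bij' (fun π _ => (cycUnlink π, genPart π)) (fun p _ => relink p.2 p.1)
    (fun _ hπ => cycUnlink_genPart_mem hπ) (fun _ hp => relink_mem_NCLF hp)
    (fun _ hπ => (mem_NCLF.1 hπ).1.relink_cycUnlink (mem_NCLF.1 hπ).2)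
    (fun _ hp => cycUnlink_genPart_relink hp) (fun π hπ => ?_)
  obtain ⟨hlp, hnc⟩ := mem_NCLF.1 hπ
  conv_lhs => rw [← hlp.relink_cycUnlink hnc]
  exact prod_relink t hlp.cycUnlink_isPartitionOfSet hlp.genPart_isPartitionOfSet
    (hlp.LL_cycUnlink_genPart hnc)

/-- For every `n ≥ 1` and every sequence `(t_k)` in a commutative ring,
`Σ_{π ∈ NCL(n)} ∏_{A block of π} t_{|A|-1}
  = Σ_{α,β ∈ NC(n), α ≪ β}
      (∏_{U β-special block of α} t_{|U|-1}) · (∏_{V non-β-special block of α} t_{|V|})`. -/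
theorem stmt16 {R : Type*} [CommRing R] (t : ℕ → R) (n : ℕ) (hn : 1 ≤ n) :
    ∑ π ∈ NCLF n, ∏ A ∈ π, t (A.card - 1)
      = ∑ p ∈ (NCF n ×ˢ NCF n).filter fun p => LL p.1 p.2,
          (∏ U ∈ p.1.filter fun U => SpecialBlock p.2 U, t (U.card - 1))
            * ∏ V ∈ p.1.filter fun V => ¬ SpecialBlock p.2 V, t V.card :=
  stmt16_general t n
end

section
/- Let (t_k)_{k ≥ 0} be a sequence in a commutative ring, and define κ_1 := t_0 and, for m ≥ 2, κ_m := Σ_{γ ∈ NC(m−1)} ∏_{V block of γ} t_{|V|}. Then for every n ≥ 1 and every β ∈ NC(n): ∏_{W block of β} κ_{|W|} = Σ_{α ∈ NC(n), α ≪ β} (∏_{U β-special block of α} t_{|U|−1}) · (∏_{V block of α that is not β-special} t_{|V|}). -/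
/-!
Both sides factor over the blocks of `β`. A partition `α ≪ β` is the same as a choice, for every
block `W` of `β`, of a non-crossing partition of `W` in which `min W` and `max W` share a block
(restrict `α` to `W`, or glue the choices together), and the `β`-special blocks of `α` are exactly
these joining blocks. So the right-hand side is a product over `W` of sums over such partitions
of `W`. For `|W| ≥ 2`, removing `max W` from its block identifies them with `NC(W ∖ {max W})`,
i.e. with `NC(|W| - 1)`, and the joining block loses precisely the element that its weight
`t_{|U|-1}` discounts; hence the factor of `W` is `κ_{|W|}`, and for singletons it is `t_0 = κ_1`.
-/

open scoped Classical

section MinMax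

variable {V : Finset ℕ}

lemma fmin_eq_min' (h : V.Nonempty) : fmin V = V.min' h := h.csInf_eq_min'

lemma fmax_eq_max' (h : V.Nonempty) : fmax V = V.max' h := h.csSup_eq_max'

lemma fmin_mem_s17 (h : V.Nonempty) : fmin V ∈ V := fmin_eq_min' h ▸ V.min'_mem h

lemma fmax_mem_s17 (h : V.Nonempty) : fmax V ∈ V := fmax_eq_max' h ▸ V.max'_mem h

lemma fmin_le_s17 {x : ℕ} (hx : x ∈ V) : fmin V ≤ x :=
  fmin_eq_min' ⟨x, hx⟩ ▸ V.min'_le x hx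

lemma le_fmax_s17 {x : ℕ} (hx : x ∈ V) : x ≤ fmax V :=
  fmax_eq_max' ⟨x, hx⟩ ▸ V.le_max' x hx

lemma fmin_singleton (x : ℕ) : fmin {x} = x := by
  rw [fmin_eq_min' (Finset.singleton_nonempty x), Finset.min'_singleton]

lemma fmax_singleton (x : ℕ) : fmax {x} = x := by
  rw [fmax_eq_max' (Finset.singleton_nonempty x), Finset.max'_singleton]

lemma fmin_insert_of_forall_lt {x : ℕ} (h : V.Nonempty) (hx : ∀ y ∈ V, y < x) :
    fmin (insert x V) = fmin V := by
  rw [fmin_eq_min' (Finset.insert_nonempty x V), fmin_eq_min' h, Finset.min'_insert _ _ h,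
    min_eq_right (hx _ (V.min'_mem h)).le]

lemma fmax_insert_of_forall_lt {x : ℕ} (hx : ∀ y ∈ V, y < x) : fmax (insert x V) = x :=
  le_antisymm
    (fmax_eq_max' (Finset.insert_nonempty x V) ▸ Finset.max'_le _ _ _
      fun y hy => (Finset.mem_insert.mp hy).elim le_of_eq fun hy => (hx y hy).le)
    (le_fmax_s17 (Finset.mem_insert_self x V))

end MinMax

lemma IsPartitionOfSet.nonempty {F : Finset ℕ} {α : Finset (Finset ℕ)} (h : IsPartitionOfSet F α)
    {V : Finset ℕ} (hV : V ∈ α) : V.Nonempty := h.1 V hV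

lemma IsPartitionOfSet.subset {F : Finset ℕ} {α : Finset (Finset ℕ)} (h : IsPartitionOfSet F α)
    {V : Finset ℕ} (hV : V ∈ α) : V ⊆ F := h.2.1 V hV

lemma IsPartitionOfSet.exists_mem {F : Finset ℕ} {α : Finset (Finset ℕ)} (h : IsPartitionOfSet F α)
    {x : ℕ} (hx : x ∈ F) : ∃ V ∈ α, x ∈ V := h.2.2.1 x hx

lemma IsPartitionOfSet.inter_eq_empty {F : Finset ℕ} {α : Finset (Finset ℕ)}
    (h : IsPartitionOfSet F α) {V W : Finset ℕ} (hV : V ∈ α) (hW : W ∈ α) (hVW : V ≠ W) :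
    V ∩ W = ∅ := h.2.2.2 V hV W hW hVW

lemma IsPartitionOfSet.eq_of_mem_of_mem {F : Finset ℕ} {α : Finset (Finset ℕ)}
    (h : IsPartitionOfSet F α) {V W : Finset ℕ} {x : ℕ} (hV : V ∈ α) (hW : W ∈ α)
    (hxV : x ∈ V) (hxW : x ∈ W) : V = W := by
  by_contra hne
  simpa [h.inter_eq_empty hV hW hne] using Finset.mem_inter.mpr ⟨hxV, hxW⟩

lemma IsPartitionOfSet.eq_of_subset_of_subset {F : Finset ℕ} {β : Finset (Finset ℕ)}
    (hβ : IsPartitionOfSet F β) {W W' B : Finset ℕ} (hW : W ∈ β) (hW' : W' ∈ β)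
    (hB : B.Nonempty) (hBW : B ⊆ W) (hBW' : B ⊆ W') : W = W' :=
  hβ.eq_of_mem_of_mem hW hW' (hBW hB.choose_spec) (hBW' hB.choose_spec)

lemma IsCrossing.mono {α α' : Finset (Finset ℕ)} (h : α ⊆ α') : IsCrossing α → IsCrossing α' :=
  fun ⟨A, hA, B, hB, hAB, hcross⟩ => ⟨A, h hA, B, h hB, hAB, hcross⟩

lemma IsCrossing.of_image_subset {α : Finset (Finset ℕ)} {φ : Finset ℕ → Finset ℕ}
    (hφ : ∀ V, φ V ⊆ V) : IsCrossing (α.image φ) → IsCrossing α := by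
  rintro ⟨_, hA', _, hB', hAB, a, ha, b, hb, c, hc, d, hd, hab, hbc, hcd⟩
  obtain ⟨A, hA, rfl⟩ := Finset.mem_image.mp hA'
  obtain ⟨B, hB, rfl⟩ := Finset.mem_image.mp hB'
  exact ⟨A, hA, B, hB, fun h => hAB (h ▸ rfl), a, hφ A ha, b, hφ B hb, c, hφ A hc, d, hφ B hd,
    hab, hbc, hcd⟩

noncomputable def ncPartitions (F : Finset ℕ) : Finset (Finset (Finset ℕ)) :=
  F.powerset.powerset.filter fun α => IsPartitionOfSet F α ∧ ¬ IsCrossing α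

lemma mem_ncPartitions {F : Finset ℕ} {α : Finset (Finset ℕ)} :
    α ∈ ncPartitions F ↔ IsPartitionOfSet F α ∧ ¬ IsCrossing α := by
  simp only [ncPartitions, Finset.mem_filter, Finset.mem_powerset, and_iff_right_iff_imp]
  exact fun h V hV => Finset.mem_powerset.mpr (h.1.subset hV)

lemma NCF_eq_ncPartitions (n : ℕ) : NCF n = ncPartitions (Finset.Icc 1 n) := by
  ext α
  simp only [NCF, Finset.mem_filter, mem_ncPartitions, IsNCPartition, IsPartitionOf,
    and_iff_right_iff_imp]
  exact fun h => Finset.mem_powerset.mpr fun V hV => Finset.mem_powerset.mpr (h.1.subset hV)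

lemma ncPartitions_singleton (x : ℕ) : ncPartitions {x} = {{{x}}} := by
  ext α
  rw [mem_ncPartitions, Finset.mem_singleton]
  constructor
  · rintro ⟨⟨hne, hsub, hcov, -⟩, -⟩
    have hblock : ∀ V ∈ α, V = {x} := fun V hV =>
      (Finset.subset_singleton_iff.mp (hsub V hV)).resolve_left (hne V hV).ne_empty
    obtain ⟨V, hV, -⟩ := hcov x (Finset.mem_singleton_self x)
    exact Finset.eq_singleton_iff_unique_mem.mpr ⟨hblock V hV ▸ hV, hblock⟩
  · rintro rfl
    refine ⟨⟨?_, ?_, ?_, ?_⟩, ?_⟩ <;> simp [IsCrossing]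

section Transport

variable {F : Finset ℕ} {f : ℕ → ℕ} {α : Finset (Finset ℕ)}

lemma not_isCrossing_mapPart (hf : StrictMonoOn f F) (hαF : ∀ V ∈ α, V ⊆ F)
    (hα : ¬ IsCrossing α) : ¬ IsCrossing (mapPart f α) := by
  rintro ⟨_, hA', _, hB', hAB, _, ha', _, hb', _, hc', _, hd', hab, hbc, hcd⟩
  obtain ⟨A, hA, rfl⟩ := Finset.mem_image.mp hA'
  obtain ⟨B, hB, rfl⟩ := Finset.mem_image.mp hB'
  obtain ⟨a, ha, rfl⟩ := Finset.mem_image.mp ha'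
  obtain ⟨b, hb, rfl⟩ := Finset.mem_image.mp hb'
  obtain ⟨c, hc, rfl⟩ := Finset.mem_image.mp hc'
  obtain ⟨d, hd, rfl⟩ := Finset.mem_image.mp hd'
  have hlt {x y : ℕ} (hx : x ∈ F) (hy : y ∈ F) : f x < f y → x < y := (hf.lt_iff_lt hx hy).mp
  exact hα ⟨A, hA, B, hB, fun h => hAB (h ▸ rfl), a, ha, b, hb, c, hc, d, hd,
    hlt (hαF A hA ha) (hαF B hB hb) hab, hlt (hαF B hB hb) (hαF A hA hc) hbc,
    hlt (hαF A hA hc) (hαF B hB hd) hcd⟩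

lemma mapPart_mem_ncPartitions (hf : StrictMonoOn f F) (hα : α ∈ ncPartitions F) :
    mapPart f α ∈ ncPartitions (F.image f) := by
  obtain ⟨hP, hnc⟩ := mem_ncPartitions.mp hα
  refine mem_ncPartitions.mpr ⟨⟨?_, ?_, ?_, ?_⟩, not_isCrossing_mapPart hf (fun _ => hP.subset) hnc⟩
  · simp only [mapPart, Finset.mem_image]
    rintro _ ⟨V, hV, rfl⟩
    exact (hP.nonempty hV).image f
  · simp only [mapPart, Finset.mem_image]
    rintro _ ⟨V, hV, rfl⟩
    exact Finset.image_subset_image (hP.subset hV)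
  · simp only [mapPart, Finset.mem_image]
    rintro _ ⟨x, hx, rfl⟩
    obtain ⟨V, hV, hxV⟩ := hP.exists_mem hx
    exact ⟨_, ⟨V, hV, rfl⟩, Finset.mem_image_of_mem f hxV⟩
  · simp only [mapPart, Finset.mem_image]
    rintro _ ⟨A, hA, rfl⟩ _ ⟨B, hB, rfl⟩ hAB
    refine Finset.eq_empty_of_forall_notMem fun y hy => ?_
    obtain ⟨⟨a, ha, rfl⟩, ⟨b, hb, hba⟩⟩ :=
      And.imp Finset.mem_image.mp Finset.mem_image.mp (Finset.mem_inter.mp hy)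
    obtain rfl := hf.injOn (hP.subset hB hb) (hP.subset hA ha) hba
    exact hAB (congrArg _ (hP.eq_of_mem_of_mem hA hB ha hb))

lemma image_image_of_leftInvOn {ι κ : Type*} [DecidableEq ι] [DecidableEq κ] {s : Finset ι}
    {f : ι → κ} {g : κ → ι} (h : ∀ x ∈ s, g (f x) = x) : (s.image f).image g = s := by
  rw [Finset.image_image, Finset.image_congr (f := g ∘ f) (g := id) fun x hx => h x hx,
    Finset.image_id]

lemma mapPart_mapPart_of_leftInvOn {g : ℕ → ℕ} (hαF : ∀ V ∈ α, V ⊆ F)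
    (h : ∀ x ∈ F, g (f x) = x) : mapPart g (mapPart f α) = α :=
  image_image_of_leftInvOn fun V hV => image_image_of_leftInvOn fun x hx => h x (hαF V hV hx)

end Transport

section OrderIso

variable {F G : Finset ℕ} (e : F ≃o G)

noncomputable def transferFun (x : ℕ) : ℕ := if h : x ∈ F then e ⟨x, h⟩ else x

variable {e}

lemma transferFun_of_mem {x : ℕ} (hx : x ∈ F) : transferFun e x = e ⟨x, hx⟩ := dif_pos hx

lemma strictMonoOn_transferFun : StrictMonoOn (transferFun e) F := fun x hx y hy hxy => by
  rw [transferFun_of_mem hx, transferFun_of_mem hy]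
  exact e.strictMono (Subtype.mk_lt_mk.mpr hxy)

lemma transferFun_symm_transferFun {x : ℕ} (hx : x ∈ F) :
    transferFun e.symm (transferFun e x) = x := by
  rw [transferFun_of_mem hx, transferFun_of_mem (e ⟨x, hx⟩).2]
  simp

lemma image_transferFun : F.image (transferFun e) = G := by
  ext y
  refine ⟨fun hy => ?_, fun hy => ?_⟩
  · obtain ⟨x, hx, rfl⟩ := Finset.mem_image.mp hy
    exact transferFun_of_mem hx ▸ (e ⟨x, hx⟩).2
  · refine Finset.mem_image.mpr ⟨transferFun e.symm y, ?_, ?_⟩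
    · rw [transferFun_of_mem hy]
      exact (e.symm _).2
    · exact transferFun_symm_transferFun (e := e.symm) hy

lemma mapPart_transferFun_mem_ncPartitions {α : Finset (Finset ℕ)} (hα : α ∈ ncPartitions F) :
    mapPart (transferFun e) α ∈ ncPartitions G := by
  have := mapPart_mem_ncPartitions (strictMonoOn_transferFun (e := e)) hα
  rwa [image_transferFun] at this

end OrderIso

lemma sum_prod_ncPartitions_congr_card {R : Type*} [CommSemiring R] (t : ℕ → R)
    {F G : Finset ℕ} (h : F.card = G.card) :
    ∑ α ∈ ncPartitions F, ∏ V ∈ α, t V.card = ∑ α ∈ ncPartitions G, ∏ V ∈ α, t V.card := by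
  set e : F ≃o G := (F.orderIsoOfFin h).symm.trans (G.orderIsoOfFin rfl)
  have subset_of_mem {F α} (hα : α ∈ ncPartitions F) : ∀ V ∈ α, V ⊆ F :=
    fun _ => (mem_ncPartitions.mp hα).1.subset
  refine Finset.sum_nbij' (mapPart (transferFun e)) (mapPart (transferFun e.symm))
    (fun _ => mapPart_transferFun_mem_ncPartitions) (fun _ => mapPart_transferFun_mem_ncPartitions)
    (fun α hα => mapPart_mapPart_of_leftInvOn (subset_of_mem hα)
      fun x hx => transferFun_symm_transferFun hx)
    (fun α hα => mapPart_mapPart_of_leftInvOn (subset_of_mem hα)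
      fun x hx => transferFun_symm_transferFun (e := e.symm) hx) fun α hα => ?_
  have hinj : ∀ V ∈ α, (V.image (transferFun e)).image (transferFun e.symm) = V :=
    fun V hV => image_image_of_leftInvOn fun x hx =>
      transferFun_symm_transferFun (subset_of_mem hα V hV hx)
  rw [mapPart, Finset.prod_image fun A hA B hB hAB => by rw [← hinj A hA, ← hinj B hB, hAB]]
  refine Finset.prod_congr rfl fun V hV => ?_
  rw [Finset.card_image_of_injOn (strictMonoOn_transferFun.injOn.mono (subset_of_mem hα V hV))]

noncomputable def ncJoiningEnds (W : Finset ℕ) : Finset (Finset (Finset ℕ)) :=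
  (ncPartitions W).filter fun δ => ∃ U ∈ δ, fmin W ∈ U ∧ fmax W ∈ U

noncomputable def endsWeight {R : Type*} [CommSemiring R] (t : ℕ → R) (W : Finset ℕ)
    (δ : Finset (Finset ℕ)) : R :=
  ∏ U ∈ δ, if fmin U = fmin W ∧ fmax U = fmax W then t (U.card - 1) else t U.card

def insertIfMem (a x : ℕ) (V : Finset ℕ) : Finset ℕ := if a ∈ V then insert x V else V

lemma mem_insertIfMem {a x y : ℕ} {V : Finset ℕ} :
    y ∈ insertIfMem a x V ↔ y ∈ V ∨ (y = x ∧ a ∈ V) := by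
  unfold insertIfMem
  split_ifs with h <;> simp [h, or_comm]

lemma erase_insertIfMem {a x : ℕ} {V : Finset ℕ} (hxV : x ∉ V) :
    (insertIfMem a x V).erase x = V := by
  unfold insertIfMem
  split_ifs
  exacts [Finset.erase_insert hxV, Finset.erase_eq_of_notMem hxV]

section NewMaximum

variable {F : Finset ℕ} {x : ℕ}

lemma not_isCrossing_image_insertIfMem (hx : ∀ y ∈ F, y < x) {α : Finset (Finset ℕ)}
    (hP : IsPartitionOfSet F α) (hnc : ¬ IsCrossing α) :
    ¬ IsCrossing (α.image (insertIfMem (fmin F) x)) := by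
  rintro ⟨_, hA', _, hB', hAB, p, hp, q, hq, r, hr, s, hs, hpq, hqr, hrs⟩
  obtain ⟨A, hA, rfl⟩ := Finset.mem_image.mp hA'
  obtain ⟨B, hB, rfl⟩ := Finset.mem_image.mp hB'
  have hAB' : A ≠ B := fun h => hAB (h ▸ rfl)
  have hsx : s ≤ x := by
    obtain hsB | ⟨rfl, -⟩ := mem_insertIfMem.mp hs
    exacts [(hx s (hP.subset hB hsB)).le, le_rfl]
  have mem_of_lt {y V} (hy : y ∈ insertIfMem (fmin F) x V) (hys : y < s) : y ∈ V :=
    (mem_insertIfMem.mp hy).resolve_right fun ⟨hyx, _⟩ => by omega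
  have hpA := mem_of_lt hp (by omega)
  have hqB := mem_of_lt hq (by omega)
  have hrA := mem_of_lt hr hrs
  obtain hsB | ⟨-, haB⟩ := mem_insertIfMem.mp hs
  · exact hnc ⟨A, hA, B, hB, hAB', p, hpA, q, hqB, r, hrA, s, hsB, hpq, hqr, hrs⟩
  · -- the new maximum lies in the block of `fmin F`, which then crosses the block of `p`
    have hap : fmin F < p := (fmin_le_s17 (hP.subset hA hpA)).lt_of_ne fun h =>
      hAB' (hP.eq_of_mem_of_mem hA hB hpA (h ▸ haB))
    exact hnc ⟨B, hB, A, hA, hAB'.symm, _, haB, p, hpA, q, hqB, r, hrA, hap, hpq, hqr⟩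

lemma image_insertIfMem_mem_ncJoiningEnds (hF : F.Nonempty) (hx : ∀ y ∈ F, y < x)
    {α : Finset (Finset ℕ)} (hα : α ∈ ncPartitions F) :
    α.image (insertIfMem (fmin F) x) ∈ ncJoiningEnds (insert x F) := by
  obtain ⟨hP, hnc⟩ := mem_ncPartitions.mp hα
  have hxF : x ∉ F := fun h => (hx x h).false
  obtain ⟨V₀, hV₀, haV₀⟩ := hP.exists_mem (fmin_mem_s17 hF)
  have hV₀x : insertIfMem (fmin F) x V₀ = insert x V₀ := if_pos haV₀
  refine Finset.mem_filter.mpr ⟨mem_ncPartitions.mpr ⟨⟨?_, ?_, ?_, ?_⟩, ?_⟩, ?_⟩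
  · simp only [Finset.mem_image]
    rintro _ ⟨V, hV, rfl⟩
    obtain ⟨y, hy⟩ := hP.nonempty hV
    exact ⟨y, mem_insertIfMem.mpr (Or.inl hy)⟩
  · simp only [Finset.mem_image]
    rintro _ ⟨V, hV, rfl⟩ y hy
    obtain hy | ⟨rfl, -⟩ := mem_insertIfMem.mp hy
    exacts [Finset.mem_insert_of_mem (hP.subset hV hy), Finset.mem_insert_self _ _]
  · intro y hy
    obtain rfl | hy := Finset.mem_insert.mp hy
    · exact ⟨_, Finset.mem_image_of_mem _ hV₀, hV₀x ▸ Finset.mem_insert_self _ _⟩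
    · obtain ⟨V, hV, hyV⟩ := hP.exists_mem hy
      exact ⟨_, Finset.mem_image_of_mem _ hV, mem_insertIfMem.mpr (Or.inl hyV)⟩
  · simp only [Finset.mem_image]
    rintro _ ⟨A, hA, rfl⟩ _ ⟨B, hB, rfl⟩ hAB
    refine Finset.eq_empty_of_forall_notMem fun y hy => hAB (congrArg _ ?_)
    obtain ⟨hyA, hyB⟩ := Finset.mem_inter.mp hy
    rcases mem_insertIfMem.mp hyA, mem_insertIfMem.mp hyB with
      ⟨hyA | ⟨hyx, haA⟩, hyB | ⟨hyx, haB⟩⟩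
    · exact hP.eq_of_mem_of_mem hA hB hyA hyB
    · exact absurd (hyx ▸ hP.subset hA hyA) hxF
    · exact absurd (hyx ▸ hP.subset hB hyB) hxF
    · exact hP.eq_of_mem_of_mem hA hB haA haB
  · exact not_isCrossing_image_insertIfMem hx hP hnc
  · refine ⟨_, Finset.mem_image_of_mem _ hV₀, ?_⟩
    rw [hV₀x, fmin_insert_of_forall_lt hF hx, fmax_insert_of_forall_lt hx]
    exact ⟨Finset.mem_insert_of_mem haV₀, Finset.mem_insert_self _ _⟩

lemma mem_iff_fmin_mem_of_mem_ncJoiningEnds (hF : F.Nonempty) (hx : ∀ y ∈ F, y < x)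
    {δ : Finset (Finset ℕ)} (hδ : δ ∈ ncJoiningEnds (insert x F)) {B : Finset ℕ} (hB : B ∈ δ) :
    x ∈ B ↔ fmin F ∈ B := by
  obtain ⟨hδ', U₀, hU₀, haU₀, hxU₀⟩ := Finset.mem_filter.mp hδ
  have hP := (mem_ncPartitions.mp hδ').1
  rw [fmin_insert_of_forall_lt hF hx] at haU₀
  rw [fmax_insert_of_forall_lt hx] at hxU₀
  exact ⟨fun h => hP.eq_of_mem_of_mem hU₀ hB hxU₀ h ▸ haU₀,
    fun h => hP.eq_of_mem_of_mem hU₀ hB haU₀ h ▸ hxU₀⟩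

lemma insertIfMem_erase_of_mem_ncJoiningEnds (hF : F.Nonempty) (hx : ∀ y ∈ F, y < x)
    {δ : Finset (Finset ℕ)} (hδ : δ ∈ ncJoiningEnds (insert x F)) {B : Finset ℕ} (hB : B ∈ δ) :
    insertIfMem (fmin F) x (B.erase x) = B := by
  have hax : fmin F ≠ x := (hx _ (fmin_mem_s17 hF)).ne
  have hiff := mem_iff_fmin_mem_of_mem_ncJoiningEnds hF hx hδ hB
  by_cases haB : fmin F ∈ B
  · rw [insertIfMem, if_pos (Finset.mem_erase.mpr ⟨hax, haB⟩), Finset.insert_erase (hiff.mpr haB)]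
  · rw [insertIfMem, if_neg fun h => haB (Finset.mem_of_mem_erase h),
      Finset.erase_eq_of_notMem (mt hiff.mp haB)]

lemma image_erase_mem_ncPartitions (hF : F.Nonempty) (hx : ∀ y ∈ F, y < x)
    {δ : Finset (Finset ℕ)} (hδ : δ ∈ ncJoiningEnds (insert x F)) :
    δ.image (·.erase x) ∈ ncPartitions F := by
  obtain ⟨hP, hnc⟩ := mem_ncPartitions.mp (Finset.mem_filter.mp hδ).1
  refine mem_ncPartitions.mpr ⟨⟨?_, ?_, ?_, ?_⟩,
    fun h => hnc (h.of_image_subset fun B => B.erase_subset x)⟩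
  · simp only [Finset.mem_image]
    rintro _ ⟨B, hB, rfl⟩
    by_cases haB : fmin F ∈ B
    · exact ⟨fmin F, Finset.mem_erase.mpr ⟨(hx _ (fmin_mem_s17 hF)).ne, haB⟩⟩
    · rw [Finset.erase_eq_of_notMem (mt (mem_iff_fmin_mem_of_mem_ncJoiningEnds hF hx hδ hB).mp haB)]
      exact hP.nonempty hB
  · simp only [Finset.mem_image]
    rintro _ ⟨B, hB, rfl⟩
    exact Finset.subset_insert_iff.mp (hP.subset hB)
  · intro y hy
    obtain ⟨B, hB, hyB⟩ := hP.exists_mem (Finset.mem_insert_of_mem hy)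
    exact ⟨_, Finset.mem_image_of_mem _ hB, Finset.mem_erase.mpr ⟨fun h => (hx y hy).ne h, hyB⟩⟩
  · simp only [Finset.mem_image]
    rintro _ ⟨A, hA, rfl⟩ _ ⟨B, hB, rfl⟩ hAB
    refine Finset.subset_empty.mp ?_
    rw [← hP.inter_eq_empty hA hB fun h => hAB (h ▸ rfl)]
    exact Finset.inter_subset_inter (A.erase_subset x) (B.erase_subset x)

lemma endsWeight_image_insertIfMem {R : Type*} [CommSemiring R] (t : ℕ → R) (hF : F.Nonempty)
    (hx : ∀ y ∈ F, y < x) {α : Finset (Finset ℕ)} (hα : α ∈ ncPartitions F) :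
    endsWeight t (insert x F) (α.image (insertIfMem (fmin F) x)) = ∏ V ∈ α, t V.card := by
  have hP := (mem_ncPartitions.mp hα).1
  have hxV : ∀ V ∈ α, x ∉ V := fun V hV h => (hx x (hP.subset hV h)).false
  rw [endsWeight, Finset.prod_image fun A hA B hB hAB => by
    rw [← erase_insertIfMem (a := fmin F) (hxV A hA), hAB, erase_insertIfMem (hxV B hB)]]
  refine Finset.prod_congr rfl fun V hV => ?_
  have hxV' : ∀ y ∈ V, y < x := fun y hy => hx y (hP.subset hV hy)
  rw [fmin_insert_of_forall_lt hF hx, fmax_insert_of_forall_lt hx]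
  by_cases haV : fmin F ∈ V
  · have hminV : fmin V = fmin F :=
      le_antisymm (fmin_le_s17 haV) (fmin_le_s17 (hP.subset hV (fmin_mem_s17 ⟨_, haV⟩)))
    rw [insertIfMem, if_pos haV, if_pos ⟨by rw [fmin_insert_of_forall_lt ⟨_, haV⟩ hxV', hminV],
      fmax_insert_of_forall_lt hxV'⟩, Finset.card_insert_of_notMem (hxV V hV), Nat.add_sub_cancel]
  · rw [insertIfMem, if_neg haV,
      if_neg fun h : _ ∧ fmax V = x => hxV V hV (h.2 ▸ fmax_mem_s17 (hP.nonempty hV))]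

lemma sum_prod_ncPartitions_eq_sum_endsWeight {R : Type*} [CommSemiring R] (t : ℕ → R)
    (hF : F.Nonempty) (hx : ∀ y ∈ F, y < x) :
    ∑ α ∈ ncPartitions F, ∏ V ∈ α, t V.card
      = ∑ δ ∈ ncJoiningEnds (insert x F), endsWeight t (insert x F) δ :=
  Finset.sum_nbij' (·.image (insertIfMem (fmin F) x)) (·.image (·.erase x))
    (fun _ => image_insertIfMem_mem_ncJoiningEnds hF hx)
    (fun _ => image_erase_mem_ncPartitions hF hx)
    (fun _ hα => image_image_of_leftInvOn fun _ hV =>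
      erase_insertIfMem fun h => (hx x ((mem_ncPartitions.mp hα).1.subset hV h)).false)
    (fun _ hδ => image_image_of_leftInvOn fun _ hB =>
      insertIfMem_erase_of_mem_ncJoiningEnds hF hx hδ hB)
    (fun _ hα => (endsWeight_image_insertIfMem t hF hx hα).symm)

end NewMaximum

lemma ncJoiningEnds_singleton (x : ℕ) : ncJoiningEnds {x} = {{{x}}} := by
  rw [ncJoiningEnds, ncPartitions_singleton, Finset.filter_singleton, if_pos]
  exact ⟨{x}, Finset.mem_singleton_self _, by simp [fmin_singleton, fmax_singleton]⟩

lemma apply_card_eq_sum_endsWeight {R : Type*} [CommSemiring R] (t κ : ℕ → R) (hκ1 : κ 1 = t 0)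
    (hκ : ∀ m, 2 ≤ m → κ m = ∑ γ ∈ NCF (m - 1), ∏ V ∈ γ, t V.card)
    {W : Finset ℕ} (hW : W.Nonempty) :
    κ W.card = ∑ δ ∈ ncJoiningEnds W, endsWeight t W δ := by
  obtain hW1 | hW2 : W.card = 1 ∨ 2 ≤ W.card := by
    have := hW.card_pos
    omega
  · obtain ⟨x, rfl⟩ := Finset.card_eq_one.mp hW1
    simp [ncJoiningEnds_singleton, endsWeight, fmin_singleton, fmax_singleton, hκ1]
  · set F := W.erase (fmax W)
    have hcard : F.card = W.card - 1 := Finset.card_erase_of_mem (fmax_mem_s17 hW)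
    have hF : F.Nonempty := Finset.card_pos.mp (by omega)
    have hx : ∀ y ∈ F, y < fmax W := fun y hy =>
      (le_fmax_s17 (Finset.mem_of_mem_erase hy)).lt_of_ne (Finset.ne_of_mem_erase hy)
    rw [hκ _ hW2, NCF_eq_ncPartitions,
      sum_prod_ncPartitions_congr_card t (G := F) (by simp [hcard]),
      sum_prod_ncPartitions_eq_sum_endsWeight t hF hx, Finset.insert_erase (fmax_mem_s17 hW)]

section Gluing

variable {F : Finset ℕ} {α β : Finset (Finset ℕ)}

lemma specialBlock_iff_s17 (hβ : IsPartitionOfSet F β) {W U : Finset ℕ} (hW : W ∈ β)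
    (hU : U.Nonempty) (hUW : U ⊆ W) :
    SpecialBlock β U ↔ fmin U = fmin W ∧ fmax U = fmax W := by
  refine ⟨fun ⟨W', hW', hmin, hmax⟩ => ?_, fun h => ⟨W, hW, h⟩⟩
  obtain rfl := hβ.eq_of_mem_of_mem hW hW' (hUW (fmin_mem_s17 hU)) (hmin ▸ fmin_mem_s17 (hβ.1 W' hW'))
  exact ⟨hmin, hmax⟩

lemma restrictL_mem_ncJoiningEnds (hβ : IsPartitionOfSet F β) (hα : α ∈ ncPartitions F)
    (hαβ : LL α β) {W : Finset ℕ} (hW : W ∈ β) : restrictL α W ∈ ncJoiningEnds W := by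
  obtain ⟨hP, hnc⟩ := mem_ncPartitions.mp hα
  have subset_of_mem {V y} (hV : V ∈ α) (hyV : y ∈ V) (hyW : y ∈ W) : V ⊆ W := by
    obtain ⟨W', hW', hVW'⟩ := hαβ.1 V hV
    rwa [hβ.eq_of_mem_of_mem hW hW' hyW (hVW' hyV)]
  refine Finset.mem_filter.mpr ⟨mem_ncPartitions.mpr ⟨⟨?_, ?_, ?_, ?_⟩, ?_⟩, ?_⟩
  · exact fun V hV => hP.1 V (Finset.mem_filter.mp hV).1
  · exact fun V hV => (Finset.mem_filter.mp hV).2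
  · intro y hyW
    obtain ⟨V, hV, hyV⟩ := hP.exists_mem (hβ.subset hW hyW)
    exact ⟨V, Finset.mem_filter.mpr ⟨hV, subset_of_mem hV hyV hyW⟩, hyV⟩
  · exact fun V hV V' hV' =>
      hP.inter_eq_empty (Finset.mem_filter.mp hV).1 (Finset.mem_filter.mp hV').1
  · exact fun h => hnc (h.mono (Finset.filter_subset _ α))
  · obtain ⟨V, hV, hminV, hmaxV⟩ := hαβ.2 W hW
    exact ⟨V, Finset.mem_filter.mpr ⟨hV, subset_of_mem hV hminV (fmin_mem_s17 (hβ.nonempty hW))⟩,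
      hminV, hmaxV⟩

lemma biUnion_restrictL (hαβ : Refines α β) :
    (Finset.univ : Finset β).biUnion (fun W => restrictL α W) = α := by
  ext V
  simp only [Finset.mem_biUnion, Finset.mem_univ, true_and, restrictL, Finset.mem_filter]
  refine ⟨fun ⟨_, hV, _⟩ => hV, fun hV => ?_⟩
  obtain ⟨W, hW, hVW⟩ := hαβ V hV
  exact ⟨⟨W, hW⟩, hV, hVW⟩

variable {p : β → Finset (Finset ℕ)}

lemma restrictL_biUnion (hβ : IsPartitionOfSet F β) (hp : ∀ W : β, p W ∈ ncPartitions W) (W : β) :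
    restrictL (Finset.univ.biUnion p) W = p W := by
  ext B
  simp only [restrictL, Finset.mem_filter, Finset.mem_biUnion, Finset.mem_univ, true_and]
  refine ⟨fun ⟨⟨W', hB⟩, hBW⟩ => ?_, fun hB => ⟨⟨W, hB⟩, (mem_ncPartitions.mp (hp W)).1.subset hB⟩⟩
  have hP' := (mem_ncPartitions.mp (hp W')).1
  rwa [Subtype.ext (hβ.eq_of_subset_of_subset W'.2 W.2 (hP'.nonempty hB) (hP'.subset hB) hBW)] at hB

lemma biUnion_mem_ncPartitions (hβ : β ∈ ncPartitions F) (hp : ∀ W : β, p W ∈ ncPartitions W) :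
    Finset.univ.biUnion p ∈ ncPartitions F := by
  obtain ⟨hPβ, hncβ⟩ := mem_ncPartitions.mp hβ
  have hP (W : β) := (mem_ncPartitions.mp (hp W)).1
  have mem_biUnion {B} : B ∈ Finset.univ.biUnion p ↔ ∃ W, B ∈ p W := by simp
  refine mem_ncPartitions.mpr ⟨⟨?_, ?_, ?_, ?_⟩, ?_⟩
  · intro B hB
    obtain ⟨W, hB⟩ := mem_biUnion.mp hB
    exact (hP W).nonempty hB
  · intro B hB
    obtain ⟨W, hB⟩ := mem_biUnion.mp hB
    exact ((hP W).subset hB).trans (hPβ.subset W.2)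
  · intro y hy
    obtain ⟨W, hW, hyW⟩ := hPβ.exists_mem hy
    obtain ⟨B, hB, hyB⟩ := (hP ⟨W, hW⟩).exists_mem hyW
    exact ⟨B, mem_biUnion.mpr ⟨_, hB⟩, hyB⟩
  · intro B hB B' hB' hBB'
    obtain ⟨W, hB⟩ := mem_biUnion.mp hB
    obtain ⟨W', hB'⟩ := mem_biUnion.mp hB'
    by_cases hWW' : W = W'
    · subst hWW'
      exact (hP W).inter_eq_empty hB hB' hBB'
    · refine Finset.subset_empty.mp ?_
      rw [← hPβ.inter_eq_empty W.2 W'.2 (Subtype.coe_ne_coe.mpr hWW')]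
      exact Finset.inter_subset_inter ((hP W).subset hB) ((hP W').subset hB')
  · rintro ⟨A, hA, B, hB, hAB, a, ha, b, hb, c, hc, d, hd, hcross⟩
    obtain ⟨W, hA⟩ := mem_biUnion.mp hA
    obtain ⟨W', hB⟩ := mem_biUnion.mp hB
    by_cases hWW' : W = W'
    · subst hWW'
      exact (mem_ncPartitions.mp (hp W)).2 ⟨A, hA, B, hB, hAB, a, ha, b, hb, c, hc, d, hd, hcross⟩
    · exact hncβ ⟨W, W.2, W', W'.2, Subtype.coe_ne_coe.mpr hWW', a, (hP W).subset hA ha,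
        b, (hP W').subset hB hb, c, (hP W).subset hA hc, d, (hP W').subset hB hd, hcross⟩

lemma biUnion_LL (hp : ∀ W : β, p W ∈ ncJoiningEnds W) : LL (Finset.univ.biUnion p) β := by
  refine ⟨fun B hB => ?_, fun W hW => ?_⟩
  · obtain ⟨W, -, hB⟩ := Finset.mem_biUnion.mp hB
    exact ⟨W, W.2, (mem_ncPartitions.mp (Finset.mem_filter.mp (hp W)).1).1.subset hB⟩
  · obtain ⟨U, hU, hends⟩ := (Finset.mem_filter.mp (hp (⟨W, hW⟩ : β))).2
    exact ⟨U, Finset.mem_biUnion.mpr ⟨_, Finset.mem_univ _, hU⟩, hends⟩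

lemma prod_specialBlock_mul_eq_prod_endsWeight {R : Type*} [CommSemiring R] (t : ℕ → R)
    (hβ : IsPartitionOfSet F β) (hα : ∀ V ∈ α, V.Nonempty) (hαβ : Refines α β) :
    (∏ U ∈ α.filter fun U => SpecialBlock β U, t (U.card - 1))
        * ∏ V ∈ α.filter fun V => ¬ SpecialBlock β V, t V.card
      = ∏ W : β, endsWeight t W (restrictL α W) := by
  have hdisj : Set.PairwiseDisjoint (↑(Finset.univ : Finset β) : Set β)
      fun W : β => restrictL α W :=
    fun W _ W' _ hWW' => Finset.disjoint_left.mpr fun B hB hB' => hWW' <| Subtype.ext <|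
      hβ.eq_of_subset_of_subset W.2 W'.2 (hα B (Finset.mem_filter.mp hB).1)
        (Finset.mem_filter.mp hB).2 (Finset.mem_filter.mp hB').2
  rw [← Finset.prod_ite]
  conv_lhs => rw [← biUnion_restrictL hαβ]
  rw [Finset.prod_biUnion hdisj]
  refine Finset.prod_congr rfl fun W _ => Finset.prod_congr rfl fun U hU => ?_
  obtain ⟨hUα, hUW⟩ := Finset.mem_filter.mp hU
  exact if_congr (specialBlock_iff_s17 hβ W.2 (hα U hUα) hUW) rfl rfl

lemma sum_LL_eq_sum_piFinset_ncJoiningEnds {R : Type*} [CommSemiring R] (t : ℕ → R)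
    (hβ : β ∈ ncPartitions F) :
    ∑ α ∈ (ncPartitions F).filter fun α => LL α β,
        (∏ U ∈ α.filter fun U => SpecialBlock β U, t (U.card - 1))
          * ∏ V ∈ α.filter fun V => ¬ SpecialBlock β V, t V.card
      = ∑ p ∈ Fintype.piFinset fun W : β => ncJoiningEnds W, ∏ W : β, endsWeight t W (p W) := by
  have hPβ := (mem_ncPartitions.mp hβ).1
  have mem_ncPartitions_of_mem {p : β → Finset (Finset ℕ)}
      (hp : p ∈ Fintype.piFinset fun W : β => ncJoiningEnds W) (W : β) : p W ∈ ncPartitions W :=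
    (Finset.mem_filter.mp (Fintype.mem_piFinset.mp hp W)).1
  refine Finset.sum_nbij' (fun α W => restrictL α W) (fun p => Finset.univ.biUnion p)
    (fun α hα => ?_) (fun p hp => ?_) (fun α hα => biUnion_restrictL (Finset.mem_filter.mp hα).2.1)
    (fun p hp => funext (restrictL_biUnion hPβ (mem_ncPartitions_of_mem hp)))
    (fun α hα => prod_specialBlock_mul_eq_prod_endsWeight t hPβ
      (fun _ => (mem_ncPartitions.mp (Finset.mem_filter.mp hα).1).1.nonempty)
      (Finset.mem_filter.mp hα).2.1)
  · obtain ⟨hα, hαβ⟩ := Finset.mem_filter.mp hα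
    exact Fintype.mem_piFinset.mpr fun W => restrictL_mem_ncJoiningEnds hPβ hα hαβ W.2
  · exact Finset.mem_filter.mpr ⟨biUnion_mem_ncPartitions hβ (mem_ncPartitions_of_mem hp),
      biUnion_LL (Fintype.mem_piFinset.mp hp)⟩

end Gluing

theorem stmt17_general {R : Type*} [CommRing R] (t : ℕ → R) (κ : ℕ → R)
    (hκ1 : κ 1 = t 0)
    (hκ : ∀ m, 2 ≤ m → κ m = ∑ γ ∈ NCF (m - 1), ∏ V ∈ γ, t V.card)
    (n : ℕ) (β : Finset (Finset ℕ)) (hβ : IsNCPartition n β) :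
    ∏ W ∈ β, κ W.card
      = ∑ α ∈ (NCF n).filter fun α => LL α β,
          (∏ U ∈ α.filter fun U => SpecialBlock β U, t (U.card - 1))
            * ∏ V ∈ α.filter fun V => ¬ SpecialBlock β V, t V.card := by
  have hβ' : β ∈ ncPartitions (Finset.Icc 1 n) := mem_ncPartitions.mpr hβ
  calc ∏ W ∈ β, κ W.card
      = ∏ W : β, ∑ δ ∈ ncJoiningEnds W, endsWeight t W δ := by
        rw [← Finset.prod_coe_sort]
        exact Finset.prod_congr rfl fun W _ =>
          apply_card_eq_sum_endsWeight t κ hκ1 hκ (hβ.1.nonempty W.2)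
    _ = ∑ p ∈ Fintype.piFinset fun W : β => ncJoiningEnds W, ∏ W : β, endsWeight t W (p W) :=
        Finset.prod_univ_sum _ _
    _ = _ := by rw [NCF_eq_ncPartitions, sum_LL_eq_sum_piFinset_ncJoiningEnds t hβ']

/-- Let `(t_k)` be a sequence in a commutative ring, `κ₁ := t₀` and,
for `m ≥ 2`, `κ_m := Σ_{γ ∈ NC(m-1)} ∏_{V block of γ} t_{|V|}`. Then for every `n ≥ 1`
and every `β ∈ NC(n)`:
`∏_{W block of β} κ_{|W|}
  = Σ_{α ∈ NC(n), α ≪ β}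
      (∏_{U β-special block of α} t_{|U|-1}) · (∏_{V non-β-special block of α} t_{|V|})`. -/
theorem stmt17 {R : Type*} [CommRing R] (t : ℕ → R) (κ : ℕ → R)
    (hκ1 : κ 1 = t 0)
    (hκ : ∀ m, 2 ≤ m → κ m = ∑ γ ∈ NCF (m - 1), ∏ V ∈ γ, t V.card)
    (n : ℕ) (hn : 1 ≤ n) (β : Finset (Finset ℕ)) (hβ : IsNCPartition n β) :
    ∏ W ∈ β, κ W.card
      = ∑ α ∈ (NCF n).filter fun α => LL α β,
          (∏ U ∈ α.filter fun U => SpecialBlock β U, t (U.card - 1))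
            * ∏ V ∈ α.filter fun V => ¬ SpecialBlock β V, t V.card :=
  stmt17_general t κ hκ1 hκ n β hβ
end
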